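/- arXiv:1803.11472 — 6 statements merged into one kernel-verified Lean document; each statement's English description precedes it below -/
import Mathlib

section
/- Let T be a measure-preserving map of a probability space (X, μ), f : X → ℝ measurable, and (B_n) positive reals with B_n → ∞ such that S_n f / B_n converges in distribution to a non-degenerate Z (Z not a.s. 0). Then there exists a constant C such that B_{2n} ≤ C · B_n for all large n. -/
open MeasureTheory Filter Topology
open scoped BoundedContinuousFunction

/-! Since `S_{2n} f = S_n f + S_n f ∘ T^n` and `T^n` preserves `μ`, tightness of `S_n f / B_n`
gives `|S_{2n} f| ≤ 2 R B_n` outside a set of small measure. Along `n` with `B_{2n} / B_n` large,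
`S_{2n} f / B_{2n}` is therefore close to `0` in probability, which contradicts the convergence of
`∫ min 1 |S_{2n} f / B_{2n}| dμ` to `∫ min 1 |z| dν > 0`. -/

noncomputable def tailRamp (M : ℝ) : ℝ →ᵇ ℝ :=
  .ofNormedAddCommGroup (fun z => min 1 (max (|z| - M) 0)) (by fun_prop) 1 fun z => by
    rw [Real.norm_eq_abs, abs_of_nonneg (le_min zero_le_one (le_max_right _ _))]
    exact min_le_left _ _

@[simp] lemma tailRamp_apply (M z : ℝ) : tailRamp M z = min 1 (max (|z| - M) 0) := rfl

lemma tailRamp_nonneg (M z : ℝ) : 0 ≤ tailRamp M z := le_min zero_le_one (le_max_right _ _)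

lemma tailRamp_le_one (M z : ℝ) : tailRamp M z ≤ 1 := min_le_left _ _

lemma tailRamp_zero_apply (z : ℝ) : tailRamp 0 z = min 1 |z| := by simp

lemma tailRamp_eq_one_of_le_abs {M z : ℝ} (h : M + 1 ≤ |z|) : tailRamp M z = 1 := by
  simp only [tailRamp_apply]
  exact min_eq_left (le_max_of_le_left (by linarith))

lemma tailRamp_eq_zero_of_abs_le {M z : ℝ} (h : |z| ≤ M) : tailRamp M z = 0 := by
  simp only [tailRamp_apply]
  rw [max_eq_right (by linarith), min_eq_right zero_le_one]

lemma tendsto_integral_tailRamp_atTop {ν : Measure ℝ} [IsFiniteMeasure ν] :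
    Tendsto (fun M => ∫ z, tailRamp M z ∂ν) atTop (𝓝 0) := by
  have hlim : ∀ z, Tendsto (fun M => tailRamp M z) atTop (𝓝 0) := fun z =>
    tendsto_const_nhds.congr' <| (eventually_ge_atTop |z|).mono fun M hM =>
      (tailRamp_eq_zero_of_abs_le hM).symm
  simpa using tendsto_integral_filter_of_dominated_convergence (fun _ => 1)
    (.of_forall fun M => (tailRamp M).continuous.aestronglyMeasurable)
    (.of_forall fun M => .of_forall fun z => by
      rw [Real.norm_of_nonneg (tailRamp_nonneg M z)]; exact tailRamp_le_one M z)
    (integrable_const 1) (.of_forall hlim)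

lemma integral_tailRamp_zero_pos {ν : Measure ℝ} [IsProbabilityMeasure ν] (hν : ν {(0 : ℝ)} < 1) :
    0 < ∫ z, tailRamp 0 z ∂ν := by
  have hsupp : Function.support (tailRamp 0) = {0}ᶜ := by
    ext z
    simp only [Function.mem_support, tailRamp_zero_apply, Set.mem_compl_iff,
      Set.mem_singleton_iff]
    constructor
    · rintro h rfl
      simp at h
    · intro hz
      exact (lt_min one_pos (abs_pos.2 hz)).ne'
  rw [integral_pos_iff_support_of_nonneg (tailRamp_nonneg 0) ((tailRamp 0).integrable ν), hsupp,
    prob_compl_eq_one_sub (measurableSet_singleton 0)]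
  exact tsub_pos_of_lt hν

section

variable {X : Type*} [MeasurableSpace X] {μ : Measure X}

lemma integrable_comp_boundedContinuous [IsFiniteMeasure μ] (g : ℝ →ᵇ ℝ) {w : X → ℝ}
    (hw : Measurable w) : Integrable (fun x => g (w x)) μ :=
  .of_bound (g.continuous.measurable.comp hw).aestronglyMeasurable ‖g‖
    (.of_forall fun x => g.norm_coe_le_norm (w x))

lemma measureReal_le_abs_le_integral_tailRamp [IsFiniteMeasure μ] {w : X → ℝ}
    (hw : Measurable w) (M : ℝ) :
    μ.real {x | M + 1 ≤ |w x|} ≤ ∫ x, tailRamp M (w x) ∂μ := by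
  calc μ.real {x | M + 1 ≤ |w x|} ≤ μ.real {x | 1 ≤ tailRamp M (w x)} :=
        measureReal_mono fun x hx => (tailRamp_eq_one_of_le_abs hx).ge
    _ ≤ ∫ x, tailRamp M (w x) ∂μ := by
        simpa using mul_meas_ge_le_integral_of_nonneg
          (.of_forall fun x => tailRamp_nonneg M (w x))
          (integrable_comp_boundedContinuous (tailRamp M) hw) 1

lemma exists_eventually_measureReal_le_abs_le_of_forall_tendsto_integral
    [IsFiniteMeasure μ] {ν : Measure ℝ} [IsFiniteMeasure ν] {ι : Type*} {l : Filter ι}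
    {W : ι → X → ℝ} (hW : ∀ i, Measurable (W i))
    (hconv : ∀ g : ℝ →ᵇ ℝ, Tendsto (fun i => ∫ x, g (W i x) ∂μ) l (𝓝 (∫ z, g z ∂ν)))
    {ε : ℝ} (hε : 0 < ε) :
    ∃ R, 0 ≤ R ∧ ∀ᶠ i in l, μ.real {x | R ≤ |W i x|} ≤ ε := by
  obtain ⟨M, hM₀, hM⟩ := ((eventually_ge_atTop 0).and
    ((tendsto_integral_tailRamp_atTop (ν := ν)).eventually_lt_const hε)).exists
  refine ⟨M + 1, by linarith, ?_⟩
  filter_upwards [(hconv (tailRamp M)).eventually_lt_const hM] with i hi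
  exact (measureReal_le_abs_le_integral_tailRamp (hW i) M).trans hi.le

lemma integral_tailRamp_zero_le [IsProbabilityMeasure μ] {w : X → ℝ} (hw : Measurable w)
    {E : Set X} (hE : MeasurableSet E) {η : ℝ} (hη₀ : 0 ≤ η) (hη : ∀ x ∉ E, |w x| ≤ η) :
    ∫ x, tailRamp 0 (w x) ∂μ ≤ μ.real E + η := by
  have hpt : ∀ x, tailRamp 0 (w x) ≤ E.indicator 1 x + η := by
    intro x
    by_cases hx : x ∈ E
    · simp only [Set.indicator_of_mem hx, Pi.one_apply]
      linarith [tailRamp_le_one 0 (w x)]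
    · simp only [Set.indicator_of_notMem hx, zero_add]
      exact (tailRamp_zero_apply _ ▸ min_le_right _ _).trans (hη x hx)
  have hind : Integrable (E.indicator (1 : X → ℝ)) μ := (integrable_const 1).indicator hE
  calc ∫ x, tailRamp 0 (w x) ∂μ ≤ ∫ x, (E.indicator 1 x + η) ∂μ :=
        integral_mono (integrable_comp_boundedContinuous _ hw) (hind.add (integrable_const η) :) hpt
    _ = μ.real E + η := by
        rw [integral_add hind (integrable_const η), integral_indicator_one hE, integral_const,
          probReal_univ, one_smul]

lemma Measurable.birkhoffSum {T : X → X} (hT : Measurable T) {f : X → ℝ} (hf : Measurable f)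
    (n : ℕ) : Measurable (birkhoffSum T f n) :=
  Finset.measurable_sum _ fun k _ => hf.comp (hT.iterate k)

end

lemma integral_tailRamp_birkhoffSum_two_mul_le {X : Type*} [MeasurableSpace X] {μ : Measure X}
    [IsProbabilityMeasure μ] {T : X → X} (hT : MeasurePreserving T μ μ) {f : X → ℝ}
    (hf : Measurable f) {b b' R : ℝ} (hb : 0 < b) (hb' : 0 < b') (hR : 0 ≤ R) (n : ℕ) :
    ∫ x, tailRamp 0 (birkhoffSum T f (2 * n) x / b') ∂μ ≤
      2 * μ.real {x | R ≤ |birkhoffSum T f n x / b|} + 2 * R * b / b' := by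
  set s := {x | R ≤ |birkhoffSum T f n x / b|}
  have hs : MeasurableSet s :=
    measurableSet_le measurable_const ((hT.measurable.birkhoffSum hf n).div_const b).abs
  have hsmall : ∀ x ∉ s, |birkhoffSum T f n x| ≤ R * b := fun x hx => by
    simp only [s, Set.mem_ofPred_eq, not_le, abs_div, abs_of_pos hb, div_lt_iff₀ hb] at hx
    exact hx.le
  have hbound : ∀ x ∉ s ∪ T^[n] ⁻¹' s, |birkhoffSum T f (2 * n) x / b'| ≤ 2 * R * b / b' := by
    intro x hx
    rw [Set.mem_union, not_or, Set.mem_preimage] at hx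
    rw [abs_div, abs_of_pos hb', div_le_div_iff_of_pos_right hb', two_mul, birkhoffSum_add]
    linarith [abs_add_le (birkhoffSum T f n x) (birkhoffSum T f n (T^[n] x)),
      hsmall x hx.1, hsmall _ hx.2]
  calc ∫ x, tailRamp 0 (birkhoffSum T f (2 * n) x / b') ∂μ
      ≤ μ.real (s ∪ T^[n] ⁻¹' s) + 2 * R * b / b' :=
        integral_tailRamp_zero_le ((hT.measurable.birkhoffSum hf _).div_const b')
          (hs.union (hs.preimage (hT.measurable.iterate n))) (by positivity) hbound
    _ ≤ μ.real s + μ.real (T^[n] ⁻¹' s) + 2 * R * b / b' := by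
        gcongr; exact measureReal_union_le _ _
    _ = 2 * μ.real s + 2 * R * b / b' := by
        rw [(hT.iterate n).measureReal_preimage hs.nullMeasurableSet]; ring

theorem stmt1_general {X : Type*} [MeasurableSpace X] (μ : Measure X) [IsProbabilityMeasure μ]
    (T : X → X) (hT : MeasurePreserving T μ μ)
    (f : X → ℝ) (hf : Measurable f)
    (B : ℕ → ℝ) (hBpos : ∀ n, 0 < B n)
    (ν : Measure ℝ) [IsProbabilityMeasure ν] (hν : ν {0} < 1)
    (hconv : ∀ g : BoundedContinuousFunction ℝ ℝ,
      Tendsto (fun n => ∫ x, g ((∑ k ∈ Finset.range n, f (T^[k] x)) / B n) ∂μ)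
        atTop (nhds (∫ z, g z ∂ν))) :
    ∃ C : ℝ, ∀ᶠ n in atTop, B (2 * n) ≤ C * B n := by
  change ∀ g : ℝ →ᵇ ℝ, Tendsto (fun n => ∫ x, g (birkhoffSum T f n x / B n) ∂μ) atTop
    (𝓝 (∫ z, g z ∂ν)) at hconv
  set c := ∫ z, tailRamp 0 z ∂ν
  have hc : 0 < c := integral_tailRamp_zero_pos hν
  obtain ⟨R, hR₀, hR⟩ := exists_eventually_measureReal_le_abs_le_of_forall_tendsto_integral
    (fun n => (hT.measurable.birkhoffSum hf n).div_const (B n)) hconv (by positivity : 0 < c / 8)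
  have hdouble : ∀ᶠ n in atTop,
      3 * c / 4 < ∫ x, tailRamp 0 (birkhoffSum T f (2 * n) x / B (2 * n)) ∂μ :=
    ((hconv _).comp (tendsto_id.const_mul_atTop' two_pos)).eventually_const_lt (by linarith)
  refine ⟨4 * R / c, ?_⟩
  filter_upwards [hR, hdouble] with n hn h2n
  have key := integral_tailRamp_birkhoffSum_two_mul_le hT hf (hBpos n) (hBpos (2 * n)) hR₀ n
  have hratio : c / 2 < 2 * R * B n / B (2 * n) := by linarith
  rw [lt_div_iff₀ (hBpos (2 * n))] at hratio
  rw [div_mul_eq_mul_div, le_div_iff₀ hc]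
  linarith

/-- If `T` preserves a probability measure `μ` and `S_n f / B_n` converges in
distribution to a limit which is not a.s. `0`, then `B_{2n} ≤ C B_n` for large `n`. -/
theorem stmt1 {X : Type*} [MeasurableSpace X] (μ : Measure X) [IsProbabilityMeasure μ]
    (T : X → X) (hT : MeasurePreserving T μ μ)
    (f : X → ℝ) (hf : Measurable f)
    (B : ℕ → ℝ) (hBpos : ∀ n, 0 < B n) (hBtop : Tendsto B atTop atTop)
    (ν : Measure ℝ) [IsProbabilityMeasure ν] (hν : ν {0} < 1)
    (hconv : ∀ g : BoundedContinuousFunction ℝ ℝ,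
      Tendsto (fun n => ∫ x, g ((∑ k ∈ Finset.range n, f (T^[k] x)) / B n) ∂μ)
        atTop (nhds (∫ z, g z ∂ν))) :
    ∃ C : ℝ, ∀ᶠ n in atTop, B (2 * n) ≤ C * B n :=
  stmt1_general μ T hT f hf B hBpos ν hν hconv
end

section
/- Let T be a measure-preserving map of a probability space (X, μ), f : X → ℝ measurable, and (B_n) positive reals with B_n → ∞ such that S_n f / B_n converges in distribution to a random variable Z that is not a.s. 0. Then B_n grows at most polynomially: there exist constants C, D > 0 such that B_n ≤ D · n^C for all n ≥ 1. -/
open MeasureTheory Filter Topology ENNReal BoundedContinuousFunction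

/-!
Write `Y n = S_n f / B_n`. The limit law `ν` charges `{|z| > ε}` for some `ε > 0`, so by the
portmanteau theorem `μ (|Y n| > ε) > δ` for some `δ > 0` and all large `n`; the laws of `Y n`
converge, hence are tight, which gives `M` with `μ (|Y n| > M) < δ / 2` for every `n`.
As `S_{a+b} f = S_a f + S_b f ∘ T^a` and `T` preserves `μ`, the event `|Y (a + b)| > ε` would be
covered by two events of measure `< δ / 2` if `ε B_{a+b} > 2 M max (B_a, B_b)`. Hence
`B_{a+b} ≤ (2M/ε) max (B_a, B_b)` once `a + b` is large, and splitting `n` into two parts of size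
at most `2n/3` turns this into polynomial growth.
-/

lemma isTightMeasureSet_range_of_tendsto {E : Type*} [MeasurableSpace E] [PseudoMetricSpace E]
    [OpensMeasurableSpace E] [SecondCountableTopology E] [CompleteSpace E]
    {P : ℕ → ProbabilityMeasure E} {P₀ : ProbabilityMeasure E} (hP : Tendsto P atTop (𝓝 P₀)) :
    IsTightMeasureSet {(m : Measure E) | m ∈ Set.range P} :=
  isTightMeasureSet_of_isCompact_closure <|
    hP.isCompact_insert_range.closure_of_subset (Set.subset_insert _ _)

lemma exists_forall_measure_norm_gt_lt_of_tendsto {E : Type*} [NormedAddCommGroup E]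
    [MeasurableSpace E] [OpensMeasurableSpace E] [SecondCountableTopology E] [CompleteSpace E]
    {P : ℕ → ProbabilityMeasure E} {P₀ : ProbabilityMeasure E} (hP : Tendsto P atTop (𝓝 P₀))
    {t : ℝ≥0∞} (ht : 0 < t) : ∃ M > 0, ∀ n, (P n : Measure E) {z | M < ‖z‖} < t := by
  obtain ⟨M, hM, hMpos⟩ := (((tendsto_measure_norm_gt_of_isTightMeasureSet
    (isTightMeasureSet_range_of_tendsto hP)).eventually (gt_mem_nhds ht)).and
      (eventually_gt_atTop 0)).exists
  refine ⟨M, hMpos, fun n => lt_of_le_of_lt ?_ hM⟩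
  exact le_iSup₂_of_le (P n : Measure E) ⟨P n, ⟨n, rfl⟩, rfl⟩ le_rfl

lemma eventually_lt_measure_of_tendsto {E ι : Type*} [MeasurableSpace E]
    [TopologicalSpace E] [OpensMeasurableSpace E] [HasOuterApproxClosed E] {l : Filter ι}
    {P : ι → ProbabilityMeasure E} {P₀ : ProbabilityMeasure E} (hP : Tendsto P l (𝓝 P₀))
    {G : Set E} (hG : IsOpen G) {t : ℝ≥0∞} (ht : t < (P₀ : Measure E) G) :
    ∀ᶠ i in l, t < (P i : Measure E) G :=
  eventually_lt_of_lt_liminf <|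
    ht.trans_le (ProbabilityMeasure.le_liminf_measure_open_of_tendsto hP hG)

lemma tendsto_probabilityMeasure_map_of_forall_integral_tendsto {X E ι : Type*}
    [MeasurableSpace X] [TopologicalSpace E] [MeasurableSpace E] [OpensMeasurableSpace E]
    {l : Filter ι} {μ : ProbabilityMeasure X} {ν : ProbabilityMeasure E}
    {Y : ι → X → E} (hY : ∀ i, Measurable (Y i))
    (hconv : ∀ g : E →ᵇ ℝ,
      Tendsto (fun i => ∫ x, g (Y i x) ∂(μ : Measure X)) l (𝓝 (∫ z, g z ∂(ν : Measure E)))) :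
    Tendsto (fun i => μ.map (hY i).aemeasurable) l (𝓝 ν) := by
  refine ProbabilityMeasure.tendsto_iff_forall_integral_tendsto.2 fun g => ?_
  simpa [integral_map (hY _).aemeasurable g.continuous.aestronglyMeasurable] using hconv g

lemma exists_pos_measure_norm_gt_ne_zero {E : Type*} [NormedAddCommGroup E] [MeasurableSpace E]
    {ν : Measure E} (hν : ν {0}ᶜ ≠ 0) : ∃ ε > 0, ν {z | ε < ‖z‖} ≠ 0 := by
  have hcover : ({0}ᶜ : Set E) ⊆ ⋃ n : ℕ, {z | 1 / (n + 1 : ℝ) < ‖z‖} := fun z hz =>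
    Set.mem_iUnion.2 (exists_nat_one_div_lt (norm_pos_iff.2 hz))
  obtain ⟨n, hn⟩ : ∃ n : ℕ, ν {z | 1 / (n + 1 : ℝ) < ‖z‖} ≠ 0 := by
    by_contra! h
    exact hν (measure_mono_null hcover (measure_iUnion_null h))
  exact ⟨_, Nat.one_div_pos_of_nat, hn⟩

lemma measurable_birkhoffSum {X M : Type*} [MeasurableSpace X] [AddCommMonoid M]
    [MeasurableSpace M] [MeasurableAdd₂ M] {T : X → X} (hT : Measurable T) {f : X → M}
    (hf : Measurable f) (n : ℕ) : Measurable (birkhoffSum T f n) :=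
  Finset.measurable_sum _ fun k _ => hf.comp (hT.iterate k)

lemma le_mul_max_of_measure_abs_birkhoffSum_div {X : Type*} [MeasurableSpace X] {μ : Measure X}
    {T : X → X} (hT : MeasurePreserving T μ μ) {f : X → ℝ} (hf : Measurable f) {B : ℕ → ℝ}
    (hB : ∀ n, 0 < B n) {ε M : ℝ} (hε : 0 < ε) {δ : ℝ≥0∞} {a b : ℕ}
    (hlow : δ < μ {x | ε < |birkhoffSum T f (a + b) x / B (a + b)|})
    (htail : ∀ n, μ {x | M < |birkhoffSum T f n x / B n|} < δ / 2) :
    B (a + b) ≤ 2 * M / ε * max (B a) (B b) := by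
  by_contra! hgt
  rw [div_mul_eq_mul_div, div_lt_iff₀ hε] at hgt
  have hsub : {x | ε < |birkhoffSum T f (a + b) x / B (a + b)|} ⊆
      {x | M < |birkhoffSum T f a x / B a|} ∪
        T^[a] ⁻¹' {x | M < |birkhoffSum T f b x / B b|} := by
    intro x hx
    by_contra! hx'
    simp only [Set.mem_union, Set.mem_preimage, Set.mem_ofPred_eq, not_or, not_lt] at hx hx'
    have hM : 0 ≤ M := (abs_nonneg _).trans hx'.1
    simp only [abs_div, abs_of_pos (hB _), lt_div_iff₀ (hB _), div_le_iff₀ (hB _)] at hx hx'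
    have ha := mul_le_mul_of_nonneg_left (le_max_left (B a) (B b)) hM
    have hb := mul_le_mul_of_nonneg_left (le_max_right (B a) (B b)) hM
    rw [birkhoffSum_add] at hx
    linarith [abs_add_le (birkhoffSum T f a x) (birkhoffSum T f b (T^[a] x))]
  have hpre : μ (T^[a] ⁻¹' {x | M < |birkhoffSum T f b x / B b|}) =
      μ {x | M < |birkhoffSum T f b x / B b|} :=
    (hT.iterate a).measure_preimage (measurableSet_lt measurable_const
      ((measurable_birkhoffSum hT.measurable hf b).div_const _).abs).nullMeasurableSet
  refine lt_irrefl δ ?_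
  calc δ < μ {x | ε < |birkhoffSum T f (a + b) x / B (a + b)|} := hlow
    _ ≤ μ {x | M < |birkhoffSum T f a x / B a|} +
        μ (T^[a] ⁻¹' {x | M < |birkhoffSum T f b x / B b|}) :=
      (measure_mono hsub).trans (measure_union_le _ _)
    _ < δ / 2 + δ / 2 := by rw [hpre]; exact ENNReal.add_lt_add (htail a) (htail b)
    _ = δ := ENNReal.add_halves δ

lemma exists_rpow_bound_of_le_mul_max {B : ℕ → ℝ} {K : ℝ} (hK : 0 ≤ K) (N : ℕ)
    (hB : ∀ a b, N ≤ a + b → B (a + b) ≤ K * max (B a) (B b)) :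
    ∃ C D : ℝ, 0 < C ∧ 0 < D ∧ ∀ n : ℕ, 1 ≤ n → B n ≤ D * (n : ℝ) ^ C := by
  obtain ⟨C, hKC, hC⟩ : ∃ C : ℕ, K ≤ (3 / 2 : ℝ) ^ C ∧ 0 < C :=
    (((tendsto_pow_atTop_atTop_of_one_lt (by norm_num : (1 : ℝ) < 3 / 2)).eventually_ge_atTop
      K).and (eventually_gt_atTop 0)).exists
  obtain ⟨D₀, hD₀⟩ := ((Set.finite_lt_nat (max N 3)).image B).bddAbove
  set D := max D₀ 1
  have hD : 0 < D := lt_max_of_lt_right one_pos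
  refine ⟨C, D, by exact_mod_cast hC, hD, fun n => ?_⟩
  simp only [Real.rpow_natCast]
  induction n using Nat.strong_induction_on with | _ n ih => ?_
  intro hn
  rcases lt_or_ge n (max N 3) with hsmall | hlarge
  · calc B n ≤ D := (hD₀ ⟨n, hsmall, rfl⟩).trans (le_max_left _ _)
      _ ≤ D * n ^ C := le_mul_of_one_le_right hD.le (one_le_pow₀ (by exact_mod_cast hn))
  · set a := (n + 1) / 2
    set b := n / 2
    have hab : a + b = n := by omega
    have ha : 3 / 2 * (a : ℝ) ≤ n := by
      have : (3 * a : ℝ) ≤ 2 * n := by exact_mod_cast (by omega : 3 * a ≤ 2 * n)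
      linarith
    have hmax : max (B a) (B b) ≤ D * (a : ℝ) ^ C :=
      max_le (ih a (by omega) (by omega)) <| (ih b (by omega) (by omega)).trans <| by
        gcongr; omega
    calc B n = B (a + b) := by rw [hab]
      _ ≤ K * max (B a) (B b) := hB a b (by omega)
      _ ≤ K * (D * (a : ℝ) ^ C) := mul_le_mul_of_nonneg_left hmax hK
      _ ≤ (3 / 2) ^ C * (D * (a : ℝ) ^ C) := by gcongr
      _ = D * (3 / 2 * (a : ℝ)) ^ C := by ring
      _ ≤ D * n ^ C := by gcongr

theorem stmt2_general {X : Type*} [MeasurableSpace X] (μ : Measure X) [IsProbabilityMeasure μ]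
    (T : X → X) (hT : MeasurePreserving T μ μ)
    (f : X → ℝ) (hf : Measurable f)
    (B : ℕ → ℝ) (hBpos : ∀ n, 0 < B n)
    (ν : Measure ℝ) [IsProbabilityMeasure ν] (hν : ν {0} < 1)
    (hconv : ∀ g : BoundedContinuousFunction ℝ ℝ,
      Tendsto (fun n => ∫ x, g ((∑ k ∈ Finset.range n, f (T^[k] x)) / B n) ∂μ)
        atTop (nhds (∫ z, g z ∂ν))) :
    ∃ C D : ℝ, 0 < C ∧ 0 < D ∧ ∀ n : ℕ, 1 ≤ n → B n ≤ D * (n : ℝ) ^ C := by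
  set Y : ℕ → X → ℝ := fun n x => birkhoffSum T f n x / B n
  have hY n : Measurable (Y n) := (measurable_birkhoffSum hT.measurable hf n).div_const _
  set P : ℕ → ProbabilityMeasure ℝ :=
    fun n => ProbabilityMeasure.map ⟨μ, inferInstance⟩ (hY n).aemeasurable
  have hP : Tendsto P atTop (𝓝 ⟨ν, inferInstance⟩) :=
    tendsto_probabilityMeasure_map_of_forall_integral_tendsto hY hconv
  have hP_apply n (r : ℝ) : (P n : Measure ℝ) {z | r < ‖z‖} = μ {x | r < |Y n x|} :=
    Measure.map_apply (hY n) (measurableSet_lt measurable_const measurable_norm)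
  obtain ⟨ε, hε, hνε⟩ := exists_pos_measure_norm_gt_ne_zero (ν := ν) <| by
    rw [prob_compl_eq_one_sub (measurableSet_singleton 0)]
    exact (tsub_pos_iff_lt.2 hν).ne'
  set δ := ν {z | ε < ‖z‖} / 2
  obtain ⟨N, hN⟩ := eventually_atTop.1 <| eventually_lt_measure_of_tendsto hP
    (isOpen_lt continuous_const continuous_norm) (ENNReal.half_lt_self hνε (measure_ne_top ν _))
  obtain ⟨M, hM, htail⟩ := exists_forall_measure_norm_gt_lt_of_tendsto hP
    (ENNReal.half_pos (ENNReal.half_pos hνε).ne')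
  simp only [hP_apply] at hN htail
  exact exists_rpow_bound_of_le_mul_max (by positivity) N fun a b hab =>
    le_mul_max_of_measure_abs_birkhoffSum_div hT hf hBpos hε (hN _ hab) htail

/-- If `T` preserves a probability measure `μ` and `S_n f / B_n` converges in
distribution to a limit which is not a.s. `0`, then `B_n` grows at most polynomially. -/
theorem stmt2 {X : Type*} [MeasurableSpace X] (μ : Measure X) [IsProbabilityMeasure μ]
    (T : X → X) (hT : MeasurePreserving T μ μ)
    (f : X → ℝ) (hf : Measurable f)
    (B : ℕ → ℝ) (hBpos : ∀ n, 0 < B n) (hBtop : Tendsto B atTop atTop)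
    (ν : Measure ℝ) [IsProbabilityMeasure ν] (hν : ν {0} < 1)
    (hconv : ∀ g : BoundedContinuousFunction ℝ ℝ,
      Tendsto (fun n => ∫ x, g ((∑ k ∈ Finset.range n, f (T^[k] x)) / B n) ∂μ)
        atTop (nhds (∫ z, g z ∂ν))) :
    ∃ C D : ℝ, 0 < C ∧ 0 < D ∧ ∀ n : ℕ, 1 ≤ n → B n ≤ D * (n : ℝ) ^ C :=
  stmt2_general μ T hT f hf B hBpos ν hν hconv
end

section
/- Let T be a conservative non-singular map of a σ-finite measure space (X, m), P a probability measure absolutely continuous with respect to m, and (A_n) a sequence of pairwise disjoint measurable subsets of X. Then P(T^{-n} A_n) → 0 in Cesàro average, i.e. (1/N)·∑_{n=0}^{N-1} P(T^{-n} A_n) → 0. -/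
/-!
Write `f_N x = (1/N) · #{k < N | T^[k] x ∈ A k}`, so that the Cesàro mean is `∫ f_N dP` and
`0 ≤ f_N ≤ 1`. It suffices to show that the limit of `∫ f_N dP` along every ultrafilter `φ`
finer than `atTop` vanishes. Along `φ`, the functional `ρ ↦ lim ∫ f_N dρ` is additive,
monotone and bounded by `ρ X`; for a finite measure `μ` equivalent to `m`, this makes
`B ↦ lim ∫_B f_N dμ` a measure, and its density `h` (a weak-* limit point of the `f_N`) satisfies
`lim ∫ f_N dρ = ∫ h dρ` for all finite `ρ ≪ μ`. Since the `A k` are disjoint, an orbit meets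
`A k` at time `k + n` for at most one `k`, so `∑_{n<M} f_N ∘ T^[n] ≤ 1 + M/N`; pushing `μ`
forward by `T^[n]` (non-singularity) yields `∑_n h ∘ T^[n] ≤ 1` a.e. By recurrence, a.e. point of
`{h > δ}` comes back to it infinitely often, which forces `h = 0` a.e., hence `∫ h dP = 0`.
-/

open MeasureTheory Filter Function

open scoped ENNReal NNReal Topology

theorem ENNReal.le_of_forall_pos_le_add_mul {a b c : ℝ≥0∞} (hc : c ≠ ∞)
    (h : ∀ g : ℝ≥0, 0 < g → a ≤ b + g * c) : a ≤ b := by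
  have : Tendsto (fun g : ℝ≥0 => b + g * c) (𝓝[>] 0) (𝓝 (b + (0 : ℝ≥0) * c)) :=
    tendsto_const_nhds.add <|
      ENNReal.Tendsto.mul_const (ENNReal.tendsto_coe.2 nhdsWithin_le_nhds) (Or.inr hc)
  simpa using ge_of_tendsto this (eventually_nhdsWithin_of_forall h)

theorem ENNReal.tsum_le_tsum_add_mul {x y a K : ℕ → ℝ≥0∞} (g : ℝ≥0∞)
    (hx : ∀ i, x i ≤ (a i + g) * K i) (hy : ∀ i, a i * K i ≤ y i) :
    ∑' i, x i ≤ ∑' i, y i + g * ∑' i, K i :=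
  calc ∑' i, x i ≤ ∑' i, (a i * K i + g * K i) :=
        ENNReal.tsum_le_tsum fun i => (hx i).trans_eq (add_mul _ _ _)
    _ = ∑' i, a i * K i + g * ∑' i, K i := by rw [ENNReal.tsum_add, ENNReal.tsum_mul_left]
    _ ≤ ∑' i, y i + g * ∑' i, K i := by gcongr; exact hy _

theorem NNReal.mem_Icc_of_floor_div_eq {a g : ℝ≥0} (hg : 0 < g) {i : ℕ} (h : ⌊a / g⌋₊ = i) :
    a ∈ Set.Icc (i * g) (i * g + g) := by
  constructor
  · rw [← le_div_iff₀ hg, ← h]; exact Nat.floor_le zero_le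
  · rw [← add_one_mul, ← div_le_iff₀ hg, ← h]; exact (Nat.lt_floor_add_one _).le

theorem Finset.sum_range_sum_range_indicator_add_le {α : Type*} {A : ℕ → Set α}
    (hdisj : Pairwise (Disjoint on A)) (y : ℕ → α) (M N : ℕ) :
    ∑ n ∈ Finset.range M, ∑ k ∈ Finset.range N, (A k).indicator 1 (y (k + n)) ≤
      (N + M : ℝ≥0∞) :=
  calc ∑ n ∈ Finset.range M, ∑ k ∈ Finset.range N, (A k).indicator 1 (y (k + n))
      = ∑ k ∈ Finset.range N, ∑ j ∈ Finset.Ico k (k + M), (A k).indicator (1 : α → ℝ≥0∞) (y j) := by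
        rw [Finset.sum_comm]
        refine Finset.sum_congr rfl fun k _ => ?_
        rw [Finset.sum_Ico_eq_sum_range, Nat.add_sub_cancel_left]
    _ ≤ ∑ k ∈ Finset.range N, ∑ j ∈ Finset.range (N + M), (A k).indicator 1 (y j) := by
        refine Finset.sum_le_sum fun k hk => Finset.sum_le_sum_of_subset fun j hj => ?_
        simp only [Finset.mem_Ico, Finset.mem_range] at hj hk ⊢
        omega
    _ = ∑ j ∈ Finset.range (N + M), (⋃ k ∈ Finset.range N, A k).indicator 1 (y j) := by
        rw [Finset.sum_comm]
        refine Finset.sum_congr rfl fun j _ => ?_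
        rw [Finset.indicator_biUnion_apply _ _ (hdisj.set_pairwise _)]
    _ ≤ ∑ _j ∈ Finset.range (N + M), 1 :=
        Finset.sum_le_sum fun j _ => Set.indicator_apply_le' (fun _ => le_rfl) fun _ => zero_le
    _ = N + M := by simp

section

variable {X : Type*}

noncomputable def hitFreq (T : X → X) (A : ℕ → Set X) (N : ℕ) (x : X) : ℝ≥0∞ :=
  (∑ k ∈ Finset.range N, (A k).indicator 1 (T^[k] x)) / N

theorem hitFreq_le_one (T : X → X) (A : ℕ → Set X) (N : ℕ) (x : X) : hitFreq T A N x ≤ 1 := by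
  refine ENNReal.div_le_of_le_mul ?_
  calc ∑ k ∈ Finset.range N, (A k).indicator 1 (T^[k] x) ≤ ∑ _k ∈ Finset.range N, (1 : ℝ≥0∞) :=
        Finset.sum_le_sum fun k _ => Set.indicator_apply_le' (fun _ => le_rfl) fun _ => zero_le
    _ = 1 * N := by simp

theorem sum_hitFreq_iterate_le {T : X → X} {A : ℕ → Set X} (hdisj : Pairwise (Disjoint on A))
    (x : X) (M N : ℕ) :
    ∑ n ∈ Finset.range M, hitFreq T A N (T^[n] x) ≤ 1 + M / N := by
  simp only [hitFreq, ← Function.iterate_add_apply, div_eq_mul_inv, ← Finset.sum_mul]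
  calc _ ≤ ((N : ℝ≥0∞) + M) * (N : ℝ≥0∞)⁻¹ := by
        gcongr
        exact Finset.sum_range_sum_range_indicator_add_le hdisj (fun j => T^[j] x) M N
    _ ≤ 1 + M * (N : ℝ≥0∞)⁻¹ := by
        rw [add_mul, ← div_eq_mul_inv (N : ℝ≥0∞)]
        gcongr
        exact ENNReal.div_self_le_one

variable [MeasurableSpace X]

theorem MeasureTheory.Measure.exists_withDensity_coe_eq {μ ρ : Measure X}
    [SigmaFinite μ] [SigmaFinite ρ] (hρ : ρ ≪ μ) :
    ∃ ψ : X → ℝ≥0, Measurable ψ ∧ μ.withDensity (fun x => ψ x) = ρ :=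
  ⟨fun x => (ρ.rnDeriv μ x).toNNReal, (ρ.measurable_rnDeriv μ).ennreal_toNNReal, by
    rw [withDensity_congr_ae ((ρ.rnDeriv_ne_top μ).mono fun x hx => ENNReal.coe_toNNReal hx),
      Measure.withDensity_rnDeriv_eq ρ μ hρ]⟩

theorem MeasureTheory.Conservative.ae_eq_zero_of_ae_tsum_ne_top {T : X → X} {μ : Measure X}
    (hT : Conservative T μ) {h : X → ℝ≥0∞} (hh : Measurable h)
    (hsum : ∀ᵐ x ∂μ, ∑' n, h (T^[n] x) ≠ ∞) : h =ᵐ[μ] 0 := by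
  have hlevel : ∀ j : ℕ, μ {x | (j : ℝ≥0∞)⁻¹ < h x} = 0 := by
    intro j
    by_contra hB
    obtain ⟨x, ⟨-, hfreq⟩, hx⟩ := ((hT.frequently_ae_mem_and_frequently_image_mem
      (measurableSet_lt measurable_const hh).nullMeasurableSet hB).and_eventually hsum).exists
    have hsmall : ∀ᶠ n in atTop, h (T^[n] x) < (j : ℝ≥0∞)⁻¹ :=
      ENNReal.tendsto_atTop_zero_of_tsum_ne_top hx |>.eventually <|
        gt_mem_nhds (ENNReal.inv_pos.2 (ENNReal.natCast_ne_top j))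
    obtain ⟨n, hn, hn'⟩ := (hfreq.and_eventually hsmall).exists
    exact lt_asymm hn hn'
  filter_upwards [ae_all_iff.2 fun j => measure_eq_zero_iff_ae_notMem.1 (hlevel j)] with x hx
  by_contra hne
  obtain ⟨j, hj⟩ := ENNReal.exists_inv_nat_lt hne
  exact hx j hj

noncomputable def ultraLintegral (φ : Ultrafilter ℕ) (f : ℕ → X → ℝ≥0∞) (ρ : Measure X) : ℝ≥0∞ :=
  (φ.map fun N => ∫⁻ x, f N x ∂ρ).lim

section UltraLintegral

variable (φ : Ultrafilter ℕ) {f : ℕ → X → ℝ≥0∞}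

theorem tendsto_ultraLintegral (f : ℕ → X → ℝ≥0∞) (ρ : Measure X) :
    Tendsto (fun N => ∫⁻ x, f N x ∂ρ) φ (𝓝 (ultraLintegral φ f ρ)) := by
  rw [tendsto_iff_comap, ← map_le_iff_le_comap, ← Ultrafilter.coe_map]
  exact Ultrafilter.le_nhds_lim _

theorem ultraLintegral_add (ρ ν : Measure X) :
    ultraLintegral φ f (ρ + ν) = ultraLintegral φ f ρ + ultraLintegral φ f ν :=
  tendsto_nhds_unique (tendsto_ultraLintegral φ f _) <| by
    simpa only [lintegral_add_measure] using
      (tendsto_ultraLintegral φ f ρ).add (tendsto_ultraLintegral φ f ν)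

theorem ultraLintegral_smul (c : ℝ≥0) (ρ : Measure X) :
    ultraLintegral φ f ((c : ℝ≥0∞) • ρ) = c * ultraLintegral φ f ρ :=
  tendsto_nhds_unique (tendsto_ultraLintegral φ f _) <| by
    simpa only [lintegral_smul_measure, smul_eq_mul] using
      ENNReal.Tendsto.const_mul (tendsto_ultraLintegral φ f ρ) (Or.inr ENNReal.coe_ne_top)

theorem ultraLintegral_mono {ρ ν : Measure X} (h : ρ ≤ ν) :
    ultraLintegral φ f ρ ≤ ultraLintegral φ f ν :=
  le_of_tendsto_of_tendsto' (tendsto_ultraLintegral φ f ρ) (tendsto_ultraLintegral φ f ν)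
    fun _ => lintegral_mono' h le_rfl

theorem ultraLintegral_le_measure_univ (hf : ∀ N x, f N x ≤ 1) (ρ : Measure X) :
    ultraLintegral φ f ρ ≤ ρ Set.univ :=
  le_of_tendsto' (tendsto_ultraLintegral φ f ρ) fun N =>
    (lintegral_mono (hf N)).trans_eq (by simp)

theorem ultraLintegral_restrict_iUnion (hf : ∀ N x, f N x ≤ 1) (ρ : Measure X)
    [IsFiniteMeasure ρ] {B : ℕ → Set X} (hB : ∀ i, MeasurableSet (B i))
    (hd : Pairwise (Disjoint on B)) :
    ultraLintegral φ f (ρ.restrict (⋃ i, B i)) = ∑' i, ultraLintegral φ f (ρ.restrict (B i)) := by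
  set tail : ℕ → Set X := fun k => ⋃ i, B (i + k)
  have hsplit : ∀ k, ultraLintegral φ f (ρ.restrict (⋃ i, B i)) =
      ∑ i ∈ Finset.range k, ultraLintegral φ f (ρ.restrict (B i)) +
        ultraLintegral φ f (ρ.restrict (tail k)) := by
    intro k
    induction k with
    | zero => simp [tail]
    | succ k ih =>
      have htail : tail k = B k ∪ tail (k + 1) := by
        simp only [tail, ← Set.union_iUnion_nat_succ fun i => B (i + k), zero_add, add_assoc,
          add_comm 1 k]
      rw [ih, htail, Measure.restrict_union (Set.disjoint_iUnion_right.2 fun i => hd (by omega))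
        (MeasurableSet.iUnion fun i => hB _), ultraLintegral_add, Finset.sum_range_succ, add_assoc]
  have htail : Tendsto (fun k => ρ (tail k)) atTop (𝓝 0) := by
    refine tendsto_of_tendsto_of_tendsto_of_le_of_le tendsto_const_nhds
      (ENNReal.tendsto_sum_nat_add (fun i => ρ (B i)) ?_) (fun _ => zero_le) fun k =>
        measure_iUnion_le _
    rw [← measure_iUnion hd hB]
    exact measure_ne_top _ _
  refine le_antisymm ?_ <| ENNReal.tsum_le_of_sum_range_le fun k => (hsplit k).symm ▸ le_self_add
  refine ge_of_tendsto (by simpa using tendsto_const_nhds.add htail)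
    (Eventually.of_forall fun k => ?_)
  rw [hsplit k]
  gcongr
  · exact ENNReal.sum_le_tsum _
  · exact (ultraLintegral_le_measure_univ φ hf _).trans_eq (Measure.restrict_apply_univ _)

theorem ultraLintegral_withDensity_restrict_mem_Icc {μ κ : Measure X}
    (hκ : ∀ B, MeasurableSet B → κ B = ultraLintegral φ f (μ.restrict B)) {ψ : X → ℝ≥0}
    {C : Set X} (hC : MeasurableSet C) {a b : ℝ≥0} (hψ : ∀ x ∈ C, ψ x ∈ Set.Icc a b) :
    ultraLintegral φ f ((μ.withDensity fun x => ψ x).restrict C) ∈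
      Set.Icc (a * κ C) (b * κ C) := by
  rw [hκ C hC, ← ultraLintegral_smul, ← ultraLintegral_smul, restrict_withDensity hC,
    ← withDensity_const, ← withDensity_const]
  constructor <;> refine ultraLintegral_mono φ (withDensity_mono ?_) <;>
    filter_upwards [ae_restrict_mem hC] with x hx
  exacts [ENNReal.coe_le_coe.2 (hψ x hx).1, ENNReal.coe_le_coe.2 (hψ x hx).2]

theorem ultraLintegral_withDensity_eq (hf : ∀ N x, f N x ≤ 1) {μ κ : Measure X}
    [IsFiniteMeasure κ] (hκ : ∀ B, MeasurableSet B → κ B = ultraLintegral φ f (μ.restrict B))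
    {ψ : X → ℝ≥0} (hψ : Measurable ψ) [IsFiniteMeasure (μ.withDensity fun x => ψ x)] :
    ultraLintegral φ f (μ.withDensity fun x => ψ x) = ∫⁻ x, ψ x ∂κ := by
  set ρ := μ.withDensity fun x => (ψ x : ℝ≥0∞)
  suffices h : ∀ g : ℝ≥0, 0 < g → ultraLintegral φ f ρ ≤ ∫⁻ x, ψ x ∂κ + g * κ Set.univ ∧
      ∫⁻ x, ψ x ∂κ ≤ ultraLintegral φ f ρ + g * κ Set.univ from
    le_antisymm (ENNReal.le_of_forall_pos_le_add_mul (measure_ne_top _ _) fun g hg => (h g hg).1)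
      (ENNReal.le_of_forall_pos_le_add_mul (measure_ne_top _ _) fun g hg => (h g hg).2)
  intro g hg
  -- Slice `X` into the level sets `C i = {i g ≤ ψ < (i + 1) g}`.
  set C : ℕ → Set X := fun i => (fun x => ⌊ψ x / g⌋₊) ⁻¹' {i}
  have hCm : ∀ i, MeasurableSet (C i) := fun i =>
    (hψ.div_const g).nat_floor (measurableSet_singleton i)
  have hCd : Pairwise (Disjoint on C) := pairwise_disjoint_fiber _
  have hCu : ⋃ i, C i = Set.univ := by
    simp only [C, ← Set.preimage_iUnion, Set.iUnion_of_singleton, Set.preimage_univ]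
  have hψC : ∀ i : ℕ, ∀ x ∈ C i, ψ x ∈ Set.Icc (i * g) (i * g + g) := fun i x hx =>
    NNReal.mem_Icc_of_floor_div_eq hg hx
  have hL := fun i => ultraLintegral_withDensity_restrict_mem_Icc φ hκ (hCm i) (hψC i)
  have hI : ∀ i : ℕ, ∫⁻ x in C i, ψ x ∂κ ∈
      Set.Icc (((i * g : ℝ≥0) : ℝ≥0∞) * κ (C i)) (((i * g + g : ℝ≥0) : ℝ≥0∞) * κ (C i)) := by
    intro i
    rw [← setLIntegral_const, ← setLIntegral_const]
    exact ⟨setLIntegral_mono (by fun_prop) fun x hx => ENNReal.coe_le_coe.2 (hψC i x hx).1,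
      setLIntegral_mono measurable_const fun x hx => ENNReal.coe_le_coe.2 (hψC i x hx).2⟩
  have hLsum : ultraLintegral φ f ρ = ∑' i, ultraLintegral φ f (ρ.restrict (C i)) := by
    rw [← ultraLintegral_restrict_iUnion φ hf ρ hCm hCd, hCu, Measure.restrict_univ]
  have hIsum : ∫⁻ x, ψ x ∂κ = ∑' i, ∫⁻ x in C i, ψ x ∂κ := by
    rw [← lintegral_iUnion hCm hCd, hCu, Measure.restrict_univ]
  have hKsum : κ Set.univ = ∑' i, κ (C i) := by rw [← measure_iUnion hCd hCm, hCu]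
  simp only [ENNReal.coe_add] at hL hI
  rw [hLsum, hIsum, hKsum]
  exact ⟨ENNReal.tsum_le_tsum_add_mul _ (fun i => (hL i).2) fun i => (hI i).1,
    ENNReal.tsum_le_tsum_add_mul _ (fun i => (hI i).2) fun i => (hL i).1⟩

theorem exists_ultraLintegral_eq_lintegral (hf : ∀ N x, f N x ≤ 1) (μ : Measure X)
    [IsFiniteMeasure μ] : ∃ h : X → ℝ≥0∞, Measurable h ∧
      ∀ ρ : Measure X, [IsFiniteMeasure ρ] → ρ ≪ μ → ultraLintegral φ f ρ = ∫⁻ x, h x ∂ρ := by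
  let κ : Measure X := Measure.ofMeasurable (fun B _ => ultraLintegral φ f (μ.restrict B))
    (by simpa using ultraLintegral_le_measure_univ φ hf (μ.restrict ∅))
    fun B hB hd => ultraLintegral_restrict_iUnion φ hf μ hB hd
  have hκ : ∀ B, MeasurableSet B → κ B = ultraLintegral φ f (μ.restrict B) :=
    fun B hB => Measure.ofMeasurable_apply B hB
  have hκμ : κ ≤ μ := Measure.le_iff.2 fun B hB => (hκ B hB).trans_le <|
    (ultraLintegral_le_measure_univ φ hf _).trans_eq (Measure.restrict_apply_univ B)
  have : IsFiniteMeasure κ := isFiniteMeasure_of_le μ hκμ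
  have hκ_density : μ.withDensity (κ.rnDeriv μ) = κ :=
    Measure.withDensity_rnDeriv_eq κ μ (Measure.absolutelyContinuous_of_le hκμ)
  refine ⟨κ.rnDeriv μ, κ.measurable_rnDeriv μ, fun ρ _ hρ => ?_⟩
  obtain ⟨ψ, hψ, rfl⟩ := Measure.exists_withDensity_coe_eq hρ
  rw [ultraLintegral_withDensity_eq φ hf hκ hψ]
  conv_lhs => rw [← hκ_density]
  rw [lintegral_withDensity_eq_lintegral_mul _ (κ.measurable_rnDeriv μ) (by fun_prop),
    lintegral_withDensity_eq_lintegral_mul _ (by fun_prop) (κ.measurable_rnDeriv μ)]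
  simp only [Pi.mul_apply, mul_comm]

end UltraLintegral

section Recurrence

variable {T : X → X} {A : ℕ → Set X} {φ : Ultrafilter ℕ}

theorem measurable_hitFreq (hT : Measurable T) (hA : ∀ n, MeasurableSet (A n)) (N : ℕ) :
    Measurable (hitFreq T A N) :=
  Measurable.div_const (Finset.measurable_sum _ fun k _ =>
    (measurable_const.indicator (hA k)).comp (hT.iterate k)) _

theorem lintegral_hitFreq (hT : Measurable T) (hA : ∀ n, MeasurableSet (A n)) (ρ : Measure X)
    (N : ℕ) : ∫⁻ x, hitFreq T A N x ∂ρ = (∑ k ∈ Finset.range N, ρ (T^[k] ⁻¹' A k)) / N := by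
  simp only [hitFreq, div_eq_mul_inv]
  have hk : ∀ k, Measurable fun x => (A k).indicator (1 : X → ℝ≥0∞) (T^[k] x) := fun k =>
    (measurable_const.indicator (hA k)).comp (hT.iterate k)
  rw [lintegral_mul_const _ (Finset.measurable_sum _ fun k _ => hk k),
    lintegral_finsetSum _ fun k _ => hk k]
  congr 1
  refine Finset.sum_congr rfl fun k _ => ?_
  rw [← lintegral_indicator_one ((hA k).preimage (hT.iterate k))]
  rfl

theorem sum_ultraLintegral_map_iterate_le (hφ : (φ : Filter ℕ) ≤ atTop) (hT : Measurable T)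
    (hA : ∀ n, MeasurableSet (A n)) (hdisj : Pairwise (Disjoint on A)) (μ : Measure X)
    [IsFiniteMeasure μ] (B : Set X) (M : ℕ) :
    ∑ n ∈ Finset.range M, ultraLintegral φ (hitFreq T A) ((μ.restrict B).map T^[n]) ≤ μ B := by
  have hbound : ∀ N : ℕ, ∑ n ∈ Finset.range M, ∫⁻ x, hitFreq T A N x ∂(μ.restrict B).map T^[n] ≤
      (1 + M * (N : ℝ≥0∞)⁻¹) * μ B := fun N =>
    calc ∑ n ∈ Finset.range M, ∫⁻ x, hitFreq T A N x ∂(μ.restrict B).map T^[n]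
        = ∑ n ∈ Finset.range M, ∫⁻ x in B, hitFreq T A N (T^[n] x) ∂μ :=
          Finset.sum_congr rfl fun n _ => lintegral_map (measurable_hitFreq hT hA N) (hT.iterate n)
      _ = ∫⁻ x in B, ∑ n ∈ Finset.range M, hitFreq T A N (T^[n] x) ∂μ :=
          (lintegral_finsetSum _ fun n _ => (measurable_hitFreq hT hA N).comp (hT.iterate n)).symm
      _ ≤ ∫⁻ _ in B, 1 + M * (N : ℝ≥0∞)⁻¹ ∂μ :=
          lintegral_mono fun x => sum_hitFreq_iterate_le hdisj x M N
      _ = (1 + M * (N : ℝ≥0∞)⁻¹) * μ B := setLIntegral_const _ _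
  have hlim : Tendsto (fun N : ℕ => (1 + M * (N : ℝ≥0∞)⁻¹) * μ B) atTop (𝓝 (μ B)) := by
    simpa using ENNReal.Tendsto.mul_const ((ENNReal.Tendsto.const_mul
      ENNReal.tendsto_inv_nat_nhds_zero (Or.inr (ENNReal.natCast_ne_top M))).const_add 1)
      (Or.inr (measure_ne_top μ B))
  exact le_of_tendsto_of_tendsto' (tendsto_finsetSum _ fun n _ => tendsto_ultraLintegral φ _ _)
    (hlim.mono_left hφ) hbound

theorem ae_tsum_comp_iterate_le_one (hφ : (φ : Filter ℕ) ≤ atTop) {μ : Measure X}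
    [IsFiniteMeasure μ] (hT : Measure.QuasiMeasurePreserving T μ μ)
    (hA : ∀ n, MeasurableSet (A n)) (hdisj : Pairwise (Disjoint on A)) {h : X → ℝ≥0∞}
    (hh : Measurable h)
    (hdensity : ∀ ρ : Measure X, [IsFiniteMeasure ρ] → ρ ≪ μ →
      ultraLintegral φ (hitFreq T A) ρ = ∫⁻ x, h x ∂ρ) :
    ∀ᵐ x ∂μ, ∑' n, h (T^[n] x) ≤ 1 := by
  have hM : ∀ M, ∀ᵐ x ∂μ, ∑ n ∈ Finset.range M, h (T^[n] x) ≤ 1 := fun M =>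
    ae_le_of_forall_setLIntegral_le_of_sigmaFinite
      (Finset.measurable_sum _ fun n _ => hh.comp (hT.measurable.iterate n)) fun B _ _ =>
    calc ∫⁻ x in B, ∑ n ∈ Finset.range M, h (T^[n] x) ∂μ
        = ∑ n ∈ Finset.range M, ∫⁻ x in B, h (T^[n] x) ∂μ :=
          lintegral_finsetSum _ fun n _ => hh.comp (hT.measurable.iterate n)
      _ = ∑ n ∈ Finset.range M, ∫⁻ x, h x ∂(μ.restrict B).map T^[n] :=
          Finset.sum_congr rfl fun n _ => (lintegral_map hh (hT.measurable.iterate n)).symm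
      _ = ∑ n ∈ Finset.range M, ultraLintegral φ (hitFreq T A) ((μ.restrict B).map T^[n]) :=
          Finset.sum_congr rfl fun n _ => (hdensity _ <|
            ((Measure.absolutelyContinuous_of_le Measure.restrict_le_self).map
              (hT.measurable.iterate n)).trans (hT.iterate n).absolutelyContinuous).symm
      _ ≤ μ B := sum_ultraLintegral_map_iterate_le hφ hT.measurable hA hdisj μ B M
      _ = ∫⁻ _ in B, 1 ∂μ := by simp
  filter_upwards [ae_all_iff.2 hM] with x hx using ENNReal.tsum_le_of_sum_range_le hx

end Recurrence

theorem tendsto_lintegral_hitFreq_zero {m : Measure X} [SigmaFinite m] {T : X → X}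
    (hT : Conservative T m) {A : ℕ → Set X} (hA : ∀ n, MeasurableSet (A n))
    (hdisj : Pairwise (Disjoint on A)) {P : Measure X} [IsFiniteMeasure P] (hP : P ≪ m) :
    Tendsto (fun N => ∫⁻ x, hitFreq T A N x ∂P) atTop (𝓝 0) := by
  have hTμ : Conservative T m.toFinite := hT.congr_ae ae_toFinite.symm
  have hPμ : P ≪ m.toFinite := hP.trans (absolutelyContinuous_toFinite m)
  refine (tendsto_iff_ultrafilter _ _ _).2 fun φ hφ => ?_
  obtain ⟨h, hh, hdensity⟩ := exists_ultraLintegral_eq_lintegral φ (hitFreq_le_one T A) m.toFinite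
  have h0 : h =ᵐ[m.toFinite] 0 := hTμ.ae_eq_zero_of_ae_tsum_ne_top hh <|
    (ae_tsum_comp_iterate_le_one hφ hTμ.toQuasiMeasurePreserving hA hdisj hh hdensity).mono
      fun x hx => ne_top_of_le_ne_top ENNReal.one_ne_top hx
  have := tendsto_ultraLintegral φ (hitFreq T A) P
  rw [hdensity P hPμ, lintegral_congr_ae (hPμ.ae_le h0)] at this
  simpa using this

end

/-- For a conservative non-singular map `T` on a σ-finite measure space, a probability
measure `P ≪ m` and pairwise disjoint measurable sets `A_n`, the probabilities
`P(T^{-n} A_n)` converge to `0` in Cesàro average. -/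
theorem stmt4 {X : Type*} [MeasurableSpace X] (m : Measure X) [SigmaFinite m]
    (T : X → X) (hT : Conservative T m)
    (P : Measure X) [IsProbabilityMeasure P] (hP : P ≪ m)
    (A : ℕ → Set X) (hA : ∀ n, MeasurableSet (A n))
    (hdisj : Pairwise (Function.onFun Disjoint A)) :
    Tendsto (fun N : ℕ => (∑ n ∈ Finset.range N, (P (T^[n] ⁻¹' A n)).toReal) / N)
      atTop (nhds 0) := by
  have key := (ENNReal.tendsto_toReal ENNReal.zero_ne_top).comp
    (tendsto_lintegral_hitFreq_zero hT hA hdisj hP)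
  refine key.congr fun N => ?_
  rw [Function.comp_apply, lintegral_hitFreq hT.measurable hA, ENNReal.toReal_div,
    ENNReal.toReal_sum fun n _ => measure_ne_top P _, ENNReal.toReal_natCast]
end

section
/- Let Y, Y_1, Y_2, … be i.i.d. ℕ-valued random variables with P(Y = n) = c/(n (log n)^2) for n ≥ 2 (c a normalizing constant), so P(Y > s) ~ c/log s. Assuming the renewal local limit P(∃j, Y_1+⋯+Y_j = s) ~ P(Y=s)/P(Y>s)^2 as s → ∞, the Markov chain X_n on ℕ starting at 0 whose excursions from 0 have i.i.d. lengths distributed as Y satisfies P(h(X_n) = k) ~ 1/((log k)·(n−k)) as k → ∞ and n−k → ∞, where h(X_n) is the number of steps since the last visit to 0. -/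
open MeasureTheory Filter ProbabilityTheory

/-- The excursion length distribution: `p n = c/(n (log n)^2)` for `n ≥ 2`, else `0`. -/
noncomputable def excursionLaw (c : ℝ) (n : ℕ) : ℝ :=
  if 2 ≤ n then c / (n * (Real.log n) ^ 2) else 0

/-- Partial sums `W_j = Y_0 + ⋯ + Y_{j-1}` of the excursion lengths: the renewal times
of the Markov chain. -/
def renewalTime {Ω : Type*} (Y : ℕ → Ω → ℕ) (j : ℕ) (ω : Ω) : ℕ :=
  ∑ i ∈ Finset.range j, Y i ω

/-- The event that the height of the chain at time `n` equals `k`: some renewal occurs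
at time `n - k` and the following excursion has length `> k`. -/
def heightEq {Ω : Type*} (Y : ℕ → Ω → ℕ) (n k : ℕ) : Set Ω :=
  {ω | ∃ j : ℕ, renewalTime Y j ω = n - k ∧ k < Y j ω}

/-! The chain has height `k` at time `n` exactly when a renewal occurs at time `s = n - k` and the
excursion starting there is longer than `k`. These events are independent, and distinct renewal
indices give a.s. disjoint events, so `P(h(X_n) = k) = P(Y > k) · u(s)` with `u(s)` the renewal
probability. Squeezing `P(Y = m)` between consecutive differences of `c / log m` and telescoping
gives `P(Y > k) ~ c / log k`; with it, the renewal asymptotic reads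
`u(s) ~ P(Y = s) / P(Y > s)² ~ 1 / (c s)`, and the two estimates multiply. -/

open Real Topology Asymptotics Function

lemma log_add_one_sub_log_mem_Icc {x : ℝ} (hx : 0 < x) :
    log (x + 1) - log x ∈ Set.Icc (1 / (x + 1)) (1 / x) := by
  have hx1 : 0 < x + 1 := by linarith
  rw [← log_div hx1.ne' hx.ne']
  constructor
  · have h := one_sub_inv_le_log_of_pos (div_pos hx1 hx)
    rwa [inv_div, one_sub_div hx1.ne', add_sub_cancel_left] at h
  · have h := log_le_sub_one_of_pos (div_pos hx1 hx)
    rwa [div_sub_one hx.ne', add_sub_cancel_left] at h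

lemma inv_log_sub_inv_log_add_one_mem_Icc {x : ℝ} (hx : 1 < x) :
    1 / log x - 1 / log (x + 1) ∈
      Set.Icc (1 / ((x + 1) * log (x + 1) ^ 2)) (1 / (x * log x ^ 2)) := by
  obtain ⟨hlow, hup⟩ := log_add_one_sub_log_mem_Icc (x := x) (by linarith)
  have hL : 0 < log x := log_pos hx
  have hL1 : log x ≤ log (x + 1) := log_le_log (by linarith) (by linarith)
  have hL1pos : 0 < log (x + 1) := hL.trans_le hL1
  have hdiff : 1 / log x - 1 / log (x + 1) = (log (x + 1) - log x) / (log x * log (x + 1)) := by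
    rw [div_sub_div _ _ hL.ne' hL1pos.ne']
    ring
  rw [hdiff]
  constructor
  · calc 1 / ((x + 1) * log (x + 1) ^ 2)
          = 1 / (x + 1) / (log (x + 1) * log (x + 1)) := by rw [div_div, sq]
      _ ≤ (log (x + 1) - log x) / (log x * log (x + 1)) := by gcongr
  · calc (log (x + 1) - log x) / (log x * log (x + 1)) ≤ 1 / x / (log x * log x) := by gcongr
      _ = 1 / (x * log x ^ 2) := by rw [div_div, sq]

lemma Antitone.hasSum_sub_succ {b : ℕ → ℝ} (hb : Antitone b) (h : Tendsto b atTop (𝓝 0)) :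
    HasSum (fun m ↦ b m - b (m + 1)) (b 0) := by
  refine (hasSum_iff_tendsto_nat_of_nonneg (fun m ↦ sub_nonneg.2 (hb m.le_succ)) _).2 ?_
  simp_rw [Finset.sum_range_sub']
  simpa using tendsto_const_nhds.sub h

lemma hasSum_div_log_sub_div_log_succ {c : ℝ} (hc : 0 ≤ c) {a : ℝ} (ha : 1 < a) :
    HasSum (fun m : ℕ ↦ c / log (a + m) - c / log (a + m + 1)) (c / log a) := by
  have hanti : Antitone fun m : ℕ ↦ c / log (a + m) := by
    refine antitone_nat_of_succ_le fun m ↦ ?_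
    have := log_pos (show 1 < a + m by linarith [m.cast_nonneg (α := ℝ)])
    gcongr
    linarith
  have hlim : Tendsto (fun m : ℕ ↦ c / log (a + m)) atTop (𝓝 0) :=
    tendsto_const_nhds.div_atTop <| tendsto_log_atTop.comp <|
      tendsto_atTop_add_const_left _ _ tendsto_natCast_atTop_atTop
  simpa [add_assoc] using hanti.hasSum_sub_succ hlim

lemma excursionLaw_nonneg {c : ℝ} (hc : 0 ≤ c) (n : ℕ) : 0 ≤ excursionLaw c n := by
  unfold excursionLaw
  split_ifs <;> positivity

lemma excursionLaw_of_two_le (c : ℝ) {n : ℕ} (hn : 2 ≤ n) :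
    excursionLaw c n = c * (1 / (n * log n ^ 2)) := by
  rw [excursionLaw, if_pos hn, mul_one_div]

lemma tsum_excursionLaw_tail_mem_Icc {c : ℝ} (hc : 0 ≤ c) {k : ℕ} (hk : 2 ≤ k) :
    ∑' m : ℕ, excursionLaw c (k + 1 + m) ∈ Set.Icc (c / log (k + 1)) (c / log k) := by
  -- each term lies between two consecutive differences of `c / log`, which telescope
  have hk' : (2 : ℝ) ≤ k := by exact_mod_cast hk
  have hgap (x : ℝ) (hx : 1 < x) := inv_log_sub_inv_log_add_one_mem_Icc hx
  have hscale (x : ℝ) : c / log x - c / log (x + 1) = c * (1 / log x - 1 / log (x + 1)) := by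
    rw [mul_sub, mul_one_div, mul_one_div]
  have hupper (m : ℕ) : excursionLaw c (k + 1 + m) ≤ c / log (k + m) - c / log (k + m + 1) := by
    have hx : (1 : ℝ) < k + m := by linarith [m.cast_nonneg (α := ℝ)]
    rw [excursionLaw_of_two_le c (by omega), hscale]
    push_cast
    refine mul_le_mul_of_nonneg_left (le_of_eq_of_le ?_ (hgap _ hx).1) hc
    ring_nf
  have hlower (m : ℕ) :
      c / log (k + 1 + m) - c / log (k + 1 + m + 1) ≤ excursionLaw c (k + 1 + m) := by
    have hx : (1 : ℝ) < k + 1 + m := by linarith [m.cast_nonneg (α := ℝ)]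
    rw [excursionLaw_of_two_le c (by omega), hscale]
    push_cast
    exact mul_le_mul_of_nonneg_left (hgap _ hx).2 hc
  have hsum_upper := hasSum_div_log_sub_div_log_succ hc (a := k) (by linarith)
  have hsum_lower := hasSum_div_log_sub_div_log_succ hc (a := k + 1) (by linarith)
  have hsummable : Summable fun m : ℕ ↦ excursionLaw c (k + 1 + m) :=
    hsum_upper.summable.of_nonneg_of_le (fun m ↦ excursionLaw_nonneg hc _) hupper
  exact ⟨hasSum_le hlower hsum_lower hsummable.hasSum,
    hasSum_le hupper hsummable.hasSum hsum_upper⟩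

lemma tendsto_log_div_log_add_one :
    Tendsto (fun k : ℕ ↦ log k / log (k + 1)) atTop (𝓝 1) := by
  have hden : Tendsto (fun k : ℕ ↦ log ((k : ℝ) + 1)) atTop atTop :=
    tendsto_log_atTop.comp (tendsto_atTop_add_const_right _ 1 tendsto_natCast_atTop_atTop)
  have hsmall := tendsto_log_nat_add_one_sub_log.div_atTop hden
  refine (by simpa using tendsto_const_nhds.sub hsmall :
    Tendsto (fun k : ℕ ↦ 1 - (log (k + 1) - log k) / log (k + 1)) atTop (𝓝 1)).congr' ?_
  filter_upwards [hden.eventually_gt_atTop 0] with k hk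
  field_simp
  ring

lemma tendsto_log_mul_tsum_excursionLaw_tail {c : ℝ} (hc : 0 ≤ c) :
    Tendsto (fun k : ℕ ↦ log k * ∑' m : ℕ, excursionLaw c (k + 1 + m)) atTop (𝓝 c) := by
  have hlower : Tendsto (fun k : ℕ ↦ c * (log k / log (k + 1))) atTop (𝓝 c) := by
    simpa using tendsto_log_div_log_add_one.const_mul c
  have hbounds : ∀ᶠ k : ℕ in atTop, 0 < log k ∧
      ∑' m : ℕ, excursionLaw c (k + 1 + m) ∈ Set.Icc (c / log (k + 1)) (c / log k) := by
    filter_upwards [eventually_ge_atTop 2] with k hk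
    exact ⟨log_pos (by exact_mod_cast hk), tsum_excursionLaw_tail_mem_Icc hc hk⟩
  refine tendsto_of_tendsto_of_tendsto_of_le_of_le' hlower tendsto_const_nhds ?_ ?_
  · filter_upwards [hbounds] with k ⟨hlog, hT_lower, _⟩
    calc c * (log k / log (k + 1)) = log k * (c / log (k + 1)) := by ring
      _ ≤ _ := mul_le_mul_of_nonneg_left hT_lower hlog.le
  · filter_upwards [hbounds] with k ⟨hlog, _, hT_upper⟩
    calc log k * _ ≤ log k * (c / log k) := mul_le_mul_of_nonneg_left hT_upper hlog.le
      _ = c := by field_simp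

section Renewal

variable {Ω : Type*} {Y : ℕ → Ω → ℕ}

lemma renewalTime_strictMono {ω : Ω} (hω : ∀ i, Y i ω ≠ 0) :
    StrictMono fun j ↦ renewalTime Y j ω :=
  strictMono_nat_of_lt_succ fun j ↦ by
    simp only [renewalTime, Finset.sum_range_succ]
    have := hω j
    omega

variable [MeasurableSpace Ω] {μ : Measure Ω}

lemma measurable_renewalTime (hY : ∀ i, Measurable (Y i)) (j : ℕ) :
    Measurable (renewalTime Y j) :=
  Finset.measurable_sum _ fun i _ ↦ hY i

lemma measure_lt_eq_tsum {X : Ω → ℕ} (hX : Measurable X) (k : ℕ) :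
    μ {ω | k < X ω} = ∑' m : ℕ, μ (X ⁻¹' {k + 1 + m}) := by
  have hunion : {ω | k < X ω} = ⋃ m : ℕ, X ⁻¹' {k + 1 + m} := by
    ext ω
    simp only [Set.mem_ofPred_eq, Set.mem_iUnion, Set.mem_preimage, Set.mem_singleton_iff]
    exact ⟨fun h ↦ ⟨X ω - (k + 1), by omega⟩, fun ⟨m, hm⟩ ↦ by omega⟩
  rw [hunion, measure_iUnion _ fun m ↦ hX (measurableSet_singleton _)]
  intro a b hab
  simp only [onFun, Set.disjoint_left, Set.mem_preimage, Set.mem_singleton_iff]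
  omega

lemma measure_heightEq (hY : ∀ i, Measurable (Y i)) (hindep : iIndepFun Y μ)
    (hident : ∀ i, IdentDistrib (Y i) (Y 0) μ μ) (hpos : ∀ᵐ ω ∂μ, ∀ i, Y i ω ≠ 0) (n k : ℕ) :
    μ (heightEq Y n k) = μ {ω | k < Y 0 ω} * μ {ω | ∃ j, renewalTime Y j ω = n - k} := by
  set A : ℕ → Set Ω := fun j ↦ renewalTime Y j ⁻¹' {n - k}
  have hA : ∀ j, MeasurableSet (A j) :=
    fun j ↦ measurable_renewalTime hY j (measurableSet_singleton _)
  have hB : ∀ j, MeasurableSet {ω | k < Y j ω} := fun j ↦ hY j measurableSet_Ioi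
  have hdisj : Pairwise (AEDisjoint μ on A) := by
    intro i j hij
    refine measure_mono_null (fun ω ⟨hi, hj⟩ ↦ ?_) (ae_iff.1 hpos)
    exact fun hω ↦ hij ((renewalTime_strictMono hω).injective (hi.trans hj.symm))
  have hfactor (j : ℕ) : μ (A j ∩ {ω | k < Y j ω}) = μ (A j) * μ {ω | k < Y 0 ω} := by
    have hsum : renewalTime Y j = ∑ i ∈ Finset.range j, Y i := by
      funext ω
      simp [renewalTime]
    have hind : IndepFun (renewalTime Y j) (Y j) μ :=
      hsum ▸ hindep.indepFun_finsetSum_of_notMem hY Finset.notMem_range_self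
    refine (hind.measure_inter_preimage_eq_mul _ _ (measurableSet_singleton _)
      measurableSet_Ioi).trans ?_
    exact congrArg _ ((hident j).measure_mem_eq measurableSet_Ioi)
  have hheight : heightEq Y n k = ⋃ j, A j ∩ {ω | k < Y j ω} := by
    ext ω
    simp [heightEq, A]
  have hrenewal : {ω | ∃ j, renewalTime Y j ω = n - k} = ⋃ j, A j := by
    ext ω
    simp [A]
  rw [hheight, hrenewal, measure_iUnion₀ (hdisj.mono fun i j h ↦ h.mono Set.inter_subset_left
    Set.inter_subset_left) fun j ↦ ((hA j).inter (hB j)).nullMeasurableSet,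
    measure_iUnion₀ hdisj fun j ↦ (hA j).nullMeasurableSet, ← ENNReal.tsum_mul_left]
  exact tsum_congr fun j ↦ (hfactor j).trans (mul_comm _ _)

lemma identDistrib_of_measure_preimage_singleton {α : Type*} [MeasurableSpace α]
    [MeasurableSingletonClass α] [Countable α] {X X' : Ω → α} (hX : Measurable X)
    (hX' : Measurable X') (h : ∀ a, μ (X ⁻¹' {a}) = μ (X' ⁻¹' {a})) : IdentDistrib X X' μ μ where
  aemeasurable_fst := hX.aemeasurable
  aemeasurable_snd := hX'.aemeasurable
  map_eq := Measure.ext_iff_singleton.2 fun a ↦ by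
    rw [Measure.map_apply hX (measurableSet_singleton a),
      Measure.map_apply hX' (measurableSet_singleton a), h]

section ExcursionLaw

variable [IsFiniteMeasure μ] {X : Ω → ℕ} {c : ℝ}

lemma ae_ne_zero_of_excursionLaw (hlaw : ∀ n, (μ (X ⁻¹' {n})).toReal = excursionLaw c n) :
    ∀ᵐ ω ∂μ, X ω ≠ 0 := by
  have h0 : (μ (X ⁻¹' {0})).toReal = 0 := (hlaw 0).trans (if_neg (by norm_num))
  refine ae_iff.2 ?_
  simp only [ne_eq, not_not]
  exact ((ENNReal.toReal_eq_zero_iff _).1 h0).resolve_right (measure_ne_top _ _)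

lemma toReal_measure_lt_eq_tsum_excursionLaw
    (hlaw : ∀ n, (μ (X ⁻¹' {n})).toReal = excursionLaw c n) (hX : Measurable X) (k : ℕ) :
    (μ {ω | k < X ω}).toReal = ∑' m, excursionLaw c (k + 1 + m) := by
  simp only [measure_lt_eq_tsum hX, ENNReal.tsum_toReal_eq fun _ ↦ measure_ne_top _ _, hlaw]

end ExcursionLaw

end Renewal

lemma isEquivalent_of_abs_sub_le {u v : ℕ → ℝ}
    (h : ∀ ε : ℝ, 0 < ε → ∃ C : ℕ, ∀ s : ℕ, C ≤ s → |u s - v s| ≤ ε * v s) :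
    u ~[atTop] v := by
  refine isLittleO_iff.2 fun ε hε ↦ ?_
  obtain ⟨C, hC⟩ := h ε hε
  filter_upwards [eventually_ge_atTop C] with s hs
  exact (hC s hs).trans (mul_le_mul_of_nonneg_left (le_abs_self _) hε.le)

lemma tendsto_natCast_mul_of_isEquivalent_excursionLaw_div_sq {c : ℝ} (hc : 0 < c)
    {u T : ℕ → ℝ} (hT : Tendsto (fun s : ℕ ↦ log s * T s) atTop (𝓝 c))
    (hu : u ~[atTop] fun s ↦ excursionLaw c s / T s ^ 2) :
    Tendsto (fun s : ℕ ↦ s * u s) atTop (𝓝 c⁻¹) := by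
  have hdensity : Tendsto (fun s : ℕ ↦ s * (excursionLaw c s / T s ^ 2)) atTop (𝓝 c⁻¹) := by
    have hlim : Tendsto (fun s : ℕ ↦ c / (log s * T s) ^ 2) atTop (𝓝 (c / c ^ 2)) :=
      tendsto_const_nhds.div (hT.pow 2) (pow_ne_zero 2 hc.ne')
    rw [show c / c ^ 2 = c⁻¹ by field_simp] at hlim
    refine hlim.congr' ?_
    filter_upwards [eventually_ge_atTop 2] with s hs
    have hs0 : (s : ℝ) ≠ 0 := by positivity
    rw [excursionLaw, if_pos hs]
    field_simp
  exact (IsEquivalent.refl.mul hu).symm.tendsto_nhds hdensity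

/-- For the Markov chain on `ℕ` whose excursions from `0` are i.i.d. with distribution
`p_n = c/(n (log n)^2)`, and assuming Nagaev's renewal asymptotic
`P(∃j, Y_1+⋯+Y_j = s) ~ P(Y = s)/P(Y > s)²`, the height `h(X_n)` of the chain at time
`n` satisfies `P(h(X_n) = k) ~ 1/((log k)·(n−k))` as `k → ∞` and `n − k → ∞`. -/
theorem stmt12 {Ω : Type*} [MeasurableSpace Ω] (μ : Measure Ω) [IsProbabilityMeasure μ]
    (c : ℝ) (hc : 0 < c)
    (Y : ℕ → Ω → ℕ) (hYmeas : ∀ i, Measurable (Y i))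
    (hindep : iIndepFun Y μ)
    (hlaw : ∀ i n, (μ (Y i ⁻¹' {n})).toReal = excursionLaw c n)
    (hrenewal : ∀ ε : ℝ, 0 < ε → ∃ C : ℕ, ∀ s : ℕ, C ≤ s →
      |(μ {ω | ∃ j : ℕ, renewalTime Y j ω = s}).toReal -
          excursionLaw c s / ((μ {ω | s < Y 0 ω}).toReal) ^ 2| ≤
        ε * (excursionLaw c s / ((μ {ω | s < Y 0 ω}).toReal) ^ 2)) :
    ∀ ε : ℝ, 0 < ε → ∃ C : ℕ, ∀ n k : ℕ, k < n → C ≤ k → C ≤ n - k →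
      |(μ (heightEq Y n k)).toReal * (Real.log k * ((n : ℝ) - k)) - 1| ≤ ε := by
  set T : ℕ → ℝ := fun k ↦ (μ {ω | k < Y 0 ω}).toReal
  set u : ℕ → ℝ := fun s ↦ (μ {ω | ∃ j, renewalTime Y j ω = s}).toReal
  have hident (i : ℕ) : IdentDistrib (Y i) (Y 0) μ μ :=
    identDistrib_of_measure_preimage_singleton (hYmeas i) (hYmeas 0) fun n ↦
      (ENNReal.toReal_eq_toReal_iff' (measure_ne_top _ _) (measure_ne_top _ _)).1
        ((hlaw i n).trans (hlaw 0 n).symm)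
  have hpos : ∀ᵐ ω ∂μ, ∀ i, Y i ω ≠ 0 :=
    ae_all_iff.2 fun i ↦ ae_ne_zero_of_excursionLaw (hlaw i)
  have hT : Tendsto (fun k : ℕ ↦ log k * T k) atTop (𝓝 c) := by
    simpa only [T, toReal_measure_lt_eq_tsum_excursionLaw (hlaw 0) (hYmeas 0)] using
      tendsto_log_mul_tsum_excursionLaw_tail hc.le
  have hu : Tendsto (fun s : ℕ ↦ s * u s) atTop (𝓝 c⁻¹) :=
    tendsto_natCast_mul_of_isEquivalent_excursionLaw_div_sq hc hT
      (isEquivalent_of_abs_sub_le hrenewal)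
  have hprod : Tendsto (fun p : ℕ × ℕ ↦ (log p.1 * T p.1) * (p.2 * u p.2)) atTop (𝓝 1) := by
    rw [← prod_atTop_atTop_eq, ← mul_inv_cancel₀ hc.ne']
    exact (hT.comp tendsto_fst).mul (hu.comp tendsto_snd)
  intro ε hε
  obtain ⟨C, hC⟩ := eventually_atTop_prod_self'.1 (Metric.tendsto_nhds.1 hprod ε hε)
  refine ⟨C, fun n k hkn hk hs ↦ ?_⟩
  rw [measure_heightEq hYmeas hindep hident hpos, ENNReal.toReal_mul, ← Nat.cast_sub hkn.le]
  calc |T k * u (n - k) * (log k * ((n - k : ℕ) : ℝ)) - 1|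
      = dist (log k * T k * ((n - k : ℕ) * u (n - k))) 1 := by rw [Real.dist_eq]; ring_nf
    _ ≤ ε := (hC k hk (n - k) hs).le
end

section
/- Suppose (Q_{n,k})_{k<n} are nonnegative numbers with Q_{n,k} ~ 1/((log k)(n−k)) uniformly as k → ∞ and n−k → ∞, and ∑_k Q_{n,k} ≤ 1. Then for any fixed β ∈ (0,1), ∑_{k=⌈n−n^β⌉}^{n−1} Q_{n,k} → β as n → ∞. -/
/-!
Write `m = ⌊n^γ⌋` and split the sum over `k ∈ [n - m, n)` into the window `n - m ≤ k < n - C` and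
the tail `n - C ≤ k < n`. On the window, `k ≥ n/2`, so `log k = log n + O(1)`, and the asymptotic
hypothesis makes the window sum `(1 ± ε) (H_m - H_C) / log n + o(1)`; since the harmonic number
`H_m` is `γ log n + O(1)`, the window sum tends to `γ` up to `O(ε)`. The tail is nonnegative, and
by `∑_k Q_{n,k} ≤ 1` it is at most one minus the window sum for `γ = 1 - ε`, hence `O(ε)` as well.
-/

open Filter Finset

lemma tendsto_add_mul_div_sub_of_tendsto_atTop {α : Type*} {l : Filter α} {f : α → ℝ}
    (hf : Tendsto f l atTop) (a b c : ℝ) :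
    Tendsto (fun x => (a + b * f x) / (f x - c)) l (nhds b) := by
  have hinv := hf.inv_tendsto_atTop
  have h : Tendsto (fun x => (a * (f x)⁻¹ + b) / (1 - c * (f x)⁻¹)) l
      (nhds ((a * 0 + b) / (1 - c * 0))) :=
    ((hinv.const_mul a).add_const b).div ((hinv.const_mul c).const_sub 1) (by simp)
  rw [mul_zero, mul_zero, zero_add, sub_zero, div_one] at h
  refine h.congr' ?_
  filter_upwards [hf.eventually_gt_atTop 0] with x hx
  field_simp

lemma eventually_two_mul_rpow_le {γ : ℝ} (hγ : γ < 1) : ∀ᶠ x : ℝ in atTop, 2 * x ^ γ ≤ x := by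
  filter_upwards [(tendsto_rpow_atTop (sub_pos.2 hγ)).eventually_ge_atTop 2,
    eventually_gt_atTop 0] with x hx hx0
  calc 2 * x ^ γ ≤ x ^ (1 - γ) * x ^ γ := by gcongr
    _ = x := by rw [← Real.rpow_add hx0, sub_add_cancel, Real.rpow_one]

lemma tendsto_natFloor_rpow {γ : ℝ} (hγ : 0 < γ) :
    Tendsto (fun n : ℕ => ⌊(n : ℝ) ^ γ⌋₊) atTop atTop :=
  tendsto_nat_floor_atTop.comp ((tendsto_rpow_atTop hγ).comp tendsto_natCast_atTop_atTop)

lemma eventually_two_mul_natFloor_rpow_le {γ : ℝ} (hγ : γ < 1) :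
    ∀ᶠ n : ℕ in atTop, 2 * ⌊(n : ℝ) ^ γ⌋₊ ≤ n := by
  filter_upwards [tendsto_natCast_atTop_atTop.eventually (eventually_two_mul_rpow_le hγ)]
    with n hn
  have : (2 * ⌊(n : ℝ) ^ γ⌋₊ : ℝ) ≤ n :=
    le_trans (by gcongr; exact Nat.floor_le (by positivity)) hn
  exact_mod_cast this

lemma log_natCast_le_log_natCast {k n : ℕ} (h : k ≤ n) : Real.log k ≤ Real.log n := by
  rcases Nat.eq_zero_or_pos k with rfl | hk
  · simpa using Real.log_natCast_nonneg n
  · exact Real.log_le_log (by exact_mod_cast hk) (by exact_mod_cast h)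

lemma log_sub_log_two_pos {n : ℕ} (hn : 2 < n) : 0 < Real.log n - Real.log 2 :=
  sub_pos.2 (Real.log_lt_log two_pos (by exact_mod_cast hn))

lemma mul_log_le_harmonic_natFloor_rpow {x : ℝ} (hx : 1 ≤ x) (γ : ℝ) :
    γ * Real.log x ≤ harmonic ⌊x ^ γ⌋₊ := by
  rw [← Real.log_rpow (by linarith)]
  exact log_le_harmonic_floor _ (by positivity)

lemma harmonic_natFloor_rpow_le {x : ℝ} (hx : 1 ≤ x) {γ : ℝ} (hγ : 0 ≤ γ) :
    harmonic ⌊x ^ γ⌋₊ ≤ 1 + γ * Real.log x := by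
  rw [← Real.log_rpow (by linarith)]
  exact harmonic_floor_le_one_add_log _ (Real.one_le_rpow hx hγ)

lemma harmonic_sub_harmonic {a b : ℕ} (hab : a ≤ b) :
    (harmonic b - harmonic a : ℝ) = ∑ j ∈ Ico (a + 1) (b + 1), (j : ℝ)⁻¹ := by
  rw [sum_Ico_eq_sub _ (by omega), sum_range_succ', sum_range_succ']
  simp [harmonic]

lemma sum_Ico_inv_sub_eq_harmonic_sub {n m C : ℕ} (hCm : C ≤ m) (hmn : m ≤ n) :
    ∑ k ∈ Ico (n - m) (n - C), ((n : ℝ) - k)⁻¹ = harmonic m - harmonic C := by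
  rw [harmonic_sub_harmonic hCm]
  have h := sum_Ico_reflect (fun j : ℕ => (j : ℝ)⁻¹) (n - m) (m := n - C) (n := n) (by omega)
  rw [show n + 1 - (n - C) = C + 1 by omega, show n + 1 - (n - m) = m + 1 by omega] at h
  rw [← h]
  refine sum_congr rfl fun k hk => ?_
  rw [Nat.cast_sub (by have := (mem_Ico.1 hk).2; omega)]

lemma div_le_of_abs_mul_sub_one_lt {q L M ε : ℝ} (hq : 0 ≤ q) (hε : ε ≤ 1)
    (h : |q * L - 1| < ε) (hLM : L ≤ M) : (1 - ε) / M ≤ q := by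
  have hqL : 1 - ε < q * L := by linarith [neg_abs_le (q * L - 1)]
  have hqM : q * L ≤ q * M := mul_le_mul_of_nonneg_left hLM hq
  have hM : 0 < M := by
    by_contra! hM
    nlinarith [mul_nonpos_of_nonneg_of_nonpos hq hM]
  rw [div_le_iff₀ hM]
  linarith

lemma le_div_of_abs_mul_sub_one_lt {q L M ε : ℝ} (hq : 0 ≤ q) (h : |q * L - 1| < ε)
    (hM : 0 < M) (hML : M ≤ L) : q ≤ (1 + ε) / M := by
  have hqL : q * L < 1 + ε := by linarith [le_abs_self (q * L - 1)]
  rw [le_div_iff₀ hM]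
  nlinarith [mul_le_mul_of_nonneg_left hML hq]

section Window

variable {Q : ℕ → ℕ → ℝ} {ε : ℝ} {C : ℕ}

lemma mul_harmonic_sub_le_sum_window (hQ0 : ∀ n k, 0 ≤ Q n k) (hε : ε ≤ 1)
    (hC : ∀ n k : ℕ, C ≤ k → C ≤ n - k → |Q n k * (Real.log k * ((n : ℝ) - k)) - 1| < ε)
    {n m : ℕ} (hCm : C ≤ m) (hmn : m + C ≤ n) :
    (1 - ε) / Real.log n * (harmonic m - harmonic C) ≤ ∑ k ∈ Ico (n - m) (n - C), Q n k := by
  rw [← sum_Ico_inv_sub_eq_harmonic_sub hCm (show m ≤ n by omega), mul_sum]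
  refine sum_le_sum fun k hk => ?_
  obtain ⟨hk₁, hk₂⟩ := mem_Ico.1 hk
  have hkn : k ≤ n := by omega
  have hkn' : (k : ℝ) ≤ n := by exact_mod_cast hkn
  rw [← div_eq_mul_inv, div_div]
  refine div_le_of_abs_mul_sub_one_lt (hQ0 n k) hε (hC n k (by omega) (by omega)) ?_
  exact mul_le_mul_of_nonneg_right (log_natCast_le_log_natCast hkn) (sub_nonneg.2 hkn')

lemma sum_window_le_mul_harmonic_sub (hQ0 : ∀ n k, 0 ≤ Q n k)
    (hC : ∀ n k : ℕ, C ≤ k → C ≤ n - k → |Q n k * (Real.log k * ((n : ℝ) - k)) - 1| < ε)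
    {n m : ℕ} (hCm : C ≤ m) (hmn : 2 * m ≤ n) (hn : 2 < n) :
    ∑ k ∈ Ico (n - m) (n - C), Q n k
      ≤ (1 + ε) / (Real.log n - Real.log 2) * (harmonic m - harmonic C) := by
  rw [← sum_Ico_inv_sub_eq_harmonic_sub hCm (show m ≤ n by omega), mul_sum]
  refine sum_le_sum fun k hk => ?_
  obtain ⟨hk₁, hk₂⟩ := mem_Ico.1 hk
  have hkn : k < n := by omega
  have hkn' : (k : ℝ) < n := by exact_mod_cast hkn
  have hnk : n ≤ k * 2 := by omega
  have hnk' : (n : ℝ) / 2 ≤ k := by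
    rw [div_le_iff₀ two_pos]; exact_mod_cast hnk
  have hlog := log_sub_log_two_pos hn
  rw [← div_eq_mul_inv, div_div]
  refine le_div_of_abs_mul_sub_one_lt (hQ0 n k) (hC n k (by omega) (by omega))
    (mul_pos hlog (sub_pos.2 hkn')) ?_
  refine mul_le_mul_of_nonneg_right ?_ (sub_nonneg.2 hkn'.le)
  rw [← Real.log_div (by positivity) two_ne_zero]
  exact Real.log_le_log (by positivity) hnk'

lemma sum_window_mem_Icc (hQ0 : ∀ n k, 0 ≤ Q n k) (hε : ε ≤ 1)
    (hC : ∀ n k : ℕ, C ≤ k → C ≤ n - k → |Q n k * (Real.log k * ((n : ℝ) - k)) - 1| < ε)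
    {γ : ℝ} (hγ0 : 0 ≤ γ) {n : ℕ} (hCm : C ≤ ⌊(n : ℝ) ^ γ⌋₊) (hmn : 2 * ⌊(n : ℝ) ^ γ⌋₊ ≤ n)
    (hn : 2 < n) :
    ∑ k ∈ Ico (n - ⌊(n : ℝ) ^ γ⌋₊) (n - C), Q n k ∈ Set.Icc
      ((1 - ε) * ((-(1 + Real.log C) + γ * Real.log n) / Real.log n))
      ((1 + ε) * ((1 + γ * Real.log n) / (Real.log n - Real.log 2))) := by
  have hn1 : (1 : ℝ) ≤ n := by exact_mod_cast (by omega : 1 ≤ n)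
  have hlogn : 0 < Real.log n := Real.log_pos (by exact_mod_cast (by omega : 1 < n))
  have hlog2 := log_sub_log_two_pos hn
  have hε0 : 0 < ε := (abs_nonneg _).trans_lt (hC (C + C) C le_rfl (by omega))
  have hHm := mul_log_le_harmonic_natFloor_rpow hn1 γ
  have hHm' := harmonic_natFloor_rpow_le hn1 hγ0
  have hHC : (0 : ℝ) ≤ harmonic C ∧ (harmonic C : ℝ) ≤ 1 + Real.log C :=
    ⟨(Real.log_natCast_nonneg _).trans (log_add_one_le_harmonic C), harmonic_le_one_add_log C⟩
  constructor
  · refine le_trans ?_ (mul_harmonic_sub_le_sum_window hQ0 hε hC hCm (by omega))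
    rw [← mul_div_right_comm, mul_div_assoc]
    gcongr
    linarith
  · refine (sum_window_le_mul_harmonic_sub hQ0 hC hCm hmn hn).trans ?_
    rw [← mul_div_right_comm, mul_div_assoc]
    gcongr
    linarith

lemma eventually_abs_sum_window_sub_lt (hQ0 : ∀ n k, 0 ≤ Q n k) (hε0 : 0 < ε) (hε : ε ≤ 1)
    (hC : ∀ n k : ℕ, C ≤ k → C ≤ n - k → |Q n k * (Real.log k * ((n : ℝ) - k)) - 1| < ε)
    {γ : ℝ} (hγ0 : 0 < γ) (hγ1 : γ < 1) :
    ∀ᶠ n : ℕ in atTop, |∑ k ∈ Ico (n - ⌊(n : ℝ) ^ γ⌋₊) (n - C), Q n k - γ| < 2 * ε := by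
  have hlog : Tendsto (fun n : ℕ => Real.log n) atTop atTop :=
    Real.tendsto_log_atTop.comp tendsto_natCast_atTop_atTop
  have hlower : Tendsto (fun n : ℕ => (1 - ε) * ((-(1 + Real.log C) + γ * Real.log n) /
      Real.log n)) atTop (nhds ((1 - ε) * γ)) := by
    simpa only [sub_zero] using
      (tendsto_add_mul_div_sub_of_tendsto_atTop hlog (-(1 + Real.log C)) γ 0).const_mul (1 - ε)
  have hupper : Tendsto (fun n : ℕ => (1 + ε) * ((1 + γ * Real.log n) /
      (Real.log n - Real.log 2))) atTop (nhds ((1 + ε) * γ)) :=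
    (tendsto_add_mul_div_sub_of_tendsto_atTop hlog 1 γ _).const_mul _
  filter_upwards [(tendsto_natFloor_rpow hγ0).eventually_ge_atTop C,
    eventually_two_mul_natFloor_rpow_le hγ1, eventually_gt_atTop 2,
    hlower.eventually_const_lt (by nlinarith : γ - 2 * ε < (1 - ε) * γ),
    hupper.eventually_lt_const (by nlinarith : (1 + ε) * γ < γ + 2 * ε)]
    with n hCm hmn hn hlo hup
  obtain ⟨hW₁, hW₂⟩ := sum_window_mem_Icc hQ0 hε hC hγ0.le hCm hmn hn
  rw [abs_lt]
  constructor <;> linarith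

lemma sum_tail_le_one_sub_sum_window (hQ0 : ∀ n k, 0 ≤ Q n k)
    (hsum : ∀ n, ∑ k ∈ range n, Q n k ≤ 1) {n m : ℕ} (hCm : C ≤ m) :
    ∑ k ∈ Ico (n - C) n, Q n k ≤ 1 - ∑ k ∈ Ico (n - m) (n - C), Q n k := by
  rw [le_sub_iff_add_le', sum_Ico_consecutive _ (by omega) (by omega)]
  refine le_trans (sum_le_sum_of_subset_of_nonneg ?_ fun k _ _ => hQ0 n k) (hsum n)
  exact fun k hk => mem_range.2 (mem_Ico.1 hk).2

end Window

/-- If nonnegative numbers `Q_{n,k}` satisfy `Q_{n,k} ~ 1/((log k)(n−k))` uniformly as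
`k → ∞` and `n − k → ∞`, and `∑_k Q_{n,k} ≤ 1`, then for fixed `β ∈ (0,1)` the sum of
`Q_{n,k}` over `k ∈ [n − n^β, n)` tends to `β`. -/
theorem stmt15 (Q : ℕ → ℕ → ℝ) (hQ0 : ∀ n k, 0 ≤ Q n k)
    (hsum : ∀ n, ∑ k ∈ Finset.range n, Q n k ≤ 1)
    (hasymp : ∀ ε : ℝ, 0 < ε → ∃ C : ℕ, ∀ n k : ℕ, C ≤ k → C ≤ n - k →
      |Q n k * (Real.log k * ((n : ℝ) - k)) - 1| < ε)
    (β : ℝ) (hβ : β ∈ Set.Ioo (0 : ℝ) 1) :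
    Tendsto (fun n : ℕ => ∑ k ∈ Finset.Ico (n - ⌊(n : ℝ) ^ β⌋₊) n, Q n k)
      atTop (nhds β) := by
  obtain ⟨hβ0, hβ1⟩ := hβ
  rw [Metric.tendsto_nhds]
  intro ε hε
  set η := min (ε / 5) (1 / 2)
  have hη0 : 0 < η := lt_min (by linarith) one_half_pos
  have hηε : η ≤ ε / 5 := min_le_left _ _
  have hη1 : η < 1 := (min_le_right _ _).trans_lt one_half_lt_one
  obtain ⟨C, hC⟩ := hasymp η hη0
  filter_upwards [eventually_abs_sum_window_sub_lt hQ0 hη0 hη1.le hC hβ0 hβ1,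
    eventually_abs_sum_window_sub_lt hQ0 hη0 hη1.le hC (sub_pos.2 hη1) (sub_lt_self 1 hη0),
    (tendsto_natFloor_rpow hβ0).eventually_ge_atTop C,
    (tendsto_natFloor_rpow (sub_pos.2 hη1)).eventually_ge_atTop C] with n hβwin hwin hCβ hC'
  have htail_nonneg : 0 ≤ ∑ k ∈ Ico (n - C) n, Q n k := sum_nonneg fun k _ => hQ0 n k
  have htail := sum_tail_le_one_sub_sum_window hQ0 hsum (n := n) hC'
  rw [Real.dist_eq, ← sum_Ico_consecutive _ (Nat.sub_le_sub_left hCβ n) (Nat.sub_le n C)]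
  rw [abs_lt] at hβwin hwin ⊢
  constructor <;> linarith
end

section
/- Let T be a non-singular map of a σ-finite measure space (X, m) with transfer operator T̂ (the predual of composition by T on L¹(m), characterized by ∫ (T̂ f)·g dm = ∫ f·(g∘T) dm for f ∈ L¹(m) and bounded measurable g). If T is conservative, then for every nonnegative f ∈ L¹(m), ∑_{n=0}^∞ T̂^n f(x) = ∞ for m-almost every x with f(x) > 0. -/
/-!
Let `S_N = ∑_{n<N} T̂ⁿ f`. If `f ≥ ε` and `S_N ≤ M` for all `N` on a set `A` (of finite measure,
since `f` is integrable), duality turns `∫_A S_N` into `∫ f · #{n < N | Tⁿ x ∈ A}`, so the latter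
stays below `M · m(A)`. By conservativity almost every point of `A` visits `A` infinitely often,
which forces `m(A) = 0`. Countably many such sets cover the points where `f > 0` and the partial
sums (which increase, `T̂` being positive) stay bounded.
-/

open MeasureTheory Filter

section

open Finset

variable {X : Type*} {T : X → X} {A : Set X}

lemma abs_indicator_one_le (s : Set X) (x : X) : |s.indicator (1 : X → ℝ) x| ≤ 1 := by
  by_cases h : x ∈ s <;> simp [h]

-- A sum of indicators rather than `Nat.count`, so that it pairs with the duality identity of a
-- transfer operator.
noncomputable def visitCount (T : X → X) (A : Set X) (N : ℕ) (x : X) : ℝ :=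
  ∑ n ∈ range N, A.indicator 1 (T^[n] x)

lemma visitCount_eq_count (T : X → X) (A : Set X) (N : ℕ) (x : X) [DecidablePred (T^[·] x ∈ A)] :
    visitCount T A N x = Nat.count (T^[·] x ∈ A) N := by
  simp [visitCount, Nat.count_eq_card_filter_range, Set.indicator_apply]

lemma visitCount_mono (T : X → X) (A : Set X) (x : X) : Monotone (visitCount T A · x) := by
  classical
  simp only [visitCount_eq_count]
  exact fun _ _ h => Nat.cast_le.2 (Nat.count_monotone _ h)

lemma visitCount_nonneg (N : ℕ) (x : X) : 0 ≤ visitCount T A N x := by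
  simpa [visitCount] using visitCount_mono T A x (Nat.zero_le N)

lemma visitCount_le (N : ℕ) (x : X) : visitCount T A N x ≤ N := by
  classical
  rw [visitCount_eq_count, Nat.cast_le]
  exact Nat.count_le _

lemma tendsto_visitCount_atTop {x : X} (h : ∃ᶠ n in atTop, T^[n] x ∈ A) :
    Tendsto (visitCount T A · x) atTop atTop := by
  classical
  have hinf := Nat.frequently_atTop_iff_infinite.1 h
  refine tendsto_atTop_atTop_of_monotone (visitCount_mono T A x) fun b => ?_
  obtain ⟨j, hj⟩ := exists_nat_ge b
  refine ⟨Nat.nth (T^[·] x ∈ A) j, ?_⟩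
  rw [visitCount_eq_count, Nat.count_nth_of_infinite hinf]
  exact hj

variable [MeasurableSpace X] {m : Measure X}

lemma Measurable.visitCount (hT : Measurable T) (hA : MeasurableSet A) (N : ℕ) :
    Measurable (visitCount T A N) :=
  Finset.measurable_sum _ fun n _ => (measurable_one.indicator hA).comp (hT.iterate n)

/-- Almost every point of `A` returns to `A` infinitely often, so the visit counts tend to infinity
on `A`, and by monotone convergence so do the integrals, unless `A` is null. -/
lemma MeasureTheory.Conservative.measure_eq_zero_of_integral_mul_visitCount_le
    (hT : Conservative T m) (hA : MeasurableSet A) {h : X → ℝ} (hh : Integrable h m)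
    (h0 : 0 ≤ᵐ[m] h) (hpos : ∀ᵐ x ∂m, x ∈ A → 0 < h x) {C : ℝ}
    (hC : ∀ N, ∫ x, h x * visitCount T A N x ∂m ≤ C) : m A = 0 := by
  have hTm : Measurable T := hT.measurable
  set F : ℕ → X → ENNReal := fun N x => ENNReal.ofReal (h x * visitCount T A N x)
  have hF_meas : ∀ N, AEMeasurable (F N) m := fun N =>
    (hh.1.aemeasurable.mul (hTm.visitCount hA N).aemeasurable).ennreal_ofReal
  have hF_int : ∀ N, ∫⁻ x, F N x ∂m ≤ ENNReal.ofReal C := fun N => by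
    have hint : Integrable (fun x => h x * visitCount T A N x) m :=
      hh.mul_bdd (hTm.visitCount hA N).aestronglyMeasurable
        (c := N) (Eventually.of_forall fun x => by
          rw [Real.norm_eq_abs, abs_of_nonneg (visitCount_nonneg N x)]
          exact visitCount_le N x)
    rw [← ofReal_integral_eq_lintegral_ofReal hint
      (h0.mono fun x hx => mul_nonneg hx (visitCount_nonneg N x))]
    exact ENNReal.ofReal_le_ofReal (hC N)
  have hsup_int : ∫⁻ x, ⨆ N, F N x ∂m ≠ ⊤ := by
    rw [lintegral_iSup' hF_meas (h0.mono fun x hx N N' hNN' =>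
      ENNReal.ofReal_le_ofReal (mul_le_mul_of_nonneg_left (visitCount_mono T A x hNN') hx))]
    exact ne_top_of_le_ne_top ENNReal.ofReal_ne_top (iSup_le hF_int)
  rw [measure_eq_zero_iff_ae_notMem]
  filter_upwards [ae_lt_top' (AEMeasurable.iSup hF_meas) hsup_int, hpos,
    hT.ae_mem_imp_frequently_image_mem hA.nullMeasurableSet] with x hfin hxpos hrec hxA
  have hF_top : Tendsto (F · x) atTop (nhds ⊤) := ENNReal.tendsto_ofReal_atTop.comp
    ((tendsto_visitCount_atTop (hrec hxA)).const_mul_atTop (hxpos hxA))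
  refine hfin.ne (iSup_eq_top.2 fun b hb => ?_)
  exact (hF_top.eventually (lt_mem_nhds hb)).exists

lemma integral_mul_indicator_one {s : Set X} (hs : MeasurableSet s) (f : X → ℝ) :
    ∫ x, f x * s.indicator 1 x ∂m = ∫ x in s, f x ∂m := by
  rw [← integral_indicator hs]
  congr with x
  by_cases h : x ∈ s <;> simp [h]

structure IsTransferOperator (m : Measure X) (T : X → X) (P : (X → ℝ) → X → ℝ) : Prop where
  integrable : ∀ u, Integrable u m → Integrable (P u) m
  integral_mul : ∀ u, Integrable u m → ∀ v : X → ℝ, Measurable v → (∃ K : ℝ, ∀ x, |v x| ≤ K) →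
    ∫ x, P u x * v x ∂m = ∫ x, u x * v (T x) ∂m

namespace IsTransferOperator

variable {P : (X → ℝ) → X → ℝ} {u : X → ℝ}

lemma ae_nonneg (hP : IsTransferOperator m T P) (hu : Integrable u m) (hu0 : 0 ≤ᵐ[m] u) :
    0 ≤ᵐ[m] P u := by
  refine ae_nonneg_of_forall_setIntegral_nonneg (hP.integrable u hu) fun s hs _ => ?_
  rw [← integral_mul_indicator_one hs,
    hP.integral_mul u hu _ (measurable_one.indicator hs) ⟨1, abs_indicator_one_le s⟩]
  exact integral_nonneg_of_ae (hu0.mono fun x hx =>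
    mul_nonneg hx (Set.indicator_nonneg (fun _ _ => zero_le_one) _))

lemma iterate (hP : IsTransferOperator m T P) (hT : Measurable T) (n : ℕ) :
    IsTransferOperator m T^[n] P^[n] := by
  induction n with
  | zero => exact ⟨fun u hu => hu, fun u _ v _ _ => rfl⟩
  | succ n ih =>
    refine ⟨fun u hu => ih.integrable _ (hP.integrable u hu), fun u hu v hv ⟨K, hK⟩ => ?_⟩
    simp only [Function.iterate_succ_apply]
    exact (ih.integral_mul _ (hP.integrable u hu) v hv ⟨K, hK⟩).trans
      (hP.integral_mul u hu _ (hv.comp (hT.iterate n)) ⟨K, fun x => hK _⟩)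

lemma integral_sum_iterate_mul (hP : IsTransferOperator m T P) (hT : Measurable T)
    (hu : Integrable u m) {v : X → ℝ} (hv : Measurable v) {K : ℝ} (hK : ∀ x, |v x| ≤ K)
    (N : ℕ) :
    ∫ x, (∑ n ∈ range N, P^[n] u x) * v x ∂m = ∫ x, u x * ∑ n ∈ range N, v (T^[n] x) ∂m := by
  have hbdd : ∀ n, ∀ᵐ x ∂m, ‖v (T^[n] x)‖ ≤ K := fun n => ae_of_all _ fun x => hK _
  have hint_left : ∀ n, Integrable (fun x => P^[n] u x * v x) m := fun n =>
    ((hP.iterate hT n).integrable u hu).mul_bdd hv.aestronglyMeasurable (hbdd 0)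
  have hint_right : ∀ n, Integrable (fun x => u x * v (T^[n] x)) m := fun n =>
    hu.mul_bdd (hv.comp (hT.iterate n)).aestronglyMeasurable (hbdd n)
  simp_rw [Finset.sum_mul, Finset.mul_sum]
  rw [integral_finsetSum _ fun n _ => hint_left n, integral_finsetSum _ fun n _ => hint_right n]
  exact Finset.sum_congr rfl fun n _ => (hP.iterate hT n).integral_mul u hu v hv ⟨K, hK⟩

lemma measure_eq_zero_of_sum_iterate_le (hP : IsTransferOperator m T P) (hT : Conservative T m)
    (hu : Integrable u m) (hu0 : 0 ≤ᵐ[m] u) (hA : MeasurableSet A) (hAfin : m A ≠ ⊤)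
    (hpos : ∀ᵐ x ∂m, x ∈ A → 0 < u x) {M : ℝ}
    (hM : ∀ᵐ x ∂m, x ∈ A → ∀ N, ∑ n ∈ range N, P^[n] u x ≤ M) : m A = 0 := by
  have hTm : Measurable T := hT.measurable
  refine hT.measure_eq_zero_of_integral_mul_visitCount_le hA hu hu0 hpos
    (C := M * m.real A) fun N => ?_
  have hS : Integrable (fun x => ∑ n ∈ range N, P^[n] u x) m :=
    integrable_finsetSum _ fun n _ => (hP.iterate hTm n).integrable u hu
  calc ∫ x, u x * visitCount T A N x ∂m
      = ∫ x, (∑ n ∈ range N, P^[n] u x) * A.indicator 1 x ∂m :=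
        (hP.integral_sum_iterate_mul hTm hu (measurable_one.indicator hA)
          (abs_indicator_one_le A) N).symm
    _ = ∫ x in A, ∑ n ∈ range N, P^[n] u x ∂m := integral_mul_indicator_one hA _
    _ ≤ ∫ x in A, M ∂m := setIntegral_mono_on_ae hS.integrableOn (integrableOn_const hAfin) hA
        (hM.mono fun x hx hxA => hx hxA N)
    _ = M * m.real A := by rw [setIntegral_const, smul_eq_mul, mul_comm]

lemma measure_setOf_le_and_sum_iterate_le_eq_zero (hP : IsTransferOperator m T P)
    (hT : Conservative T m) (hu : Integrable u m) (hu0 : 0 ≤ᵐ[m] u) {ε : ℝ} (hε : 0 < ε)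
    (M : ℝ) : m {x | ε ≤ u x ∧ ∀ N, ∑ n ∈ range N, P^[n] u x ≤ M} = 0 := by
  set E := {x | ε ≤ u x ∧ ∀ N, ∑ n ∈ range N, P^[n] u x ≤ M}
  have hS : ∀ N, AEMeasurable (fun x => ∑ n ∈ range N, P^[n] u x) m := fun N =>
    (integrable_finsetSum _ fun n _ => (hP.iterate hT.measurable n).integrable u hu).aemeasurable
  have hE : NullMeasurableSet E m := by
    have : E = {x | ε ≤ u x} ∩ ⋂ N, {x | ∑ n ∈ range N, P^[n] u x ≤ M} := by ext; simp [E]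
    rw [this]
    exact (nullMeasurableSet_le aemeasurable_const hu.aemeasurable).inter
      (.iInter fun N => nullMeasurableSet_le (hS N) aemeasurable_const)
  have hE_fin : m (toMeasurable m E) ≠ ⊤ := by
    rw [measure_toMeasurable]
    exact ((measure_mono fun x hx => hx.1).trans_lt (hu.measure_ge_lt_top hε)).ne
  have hmem : ∀ᵐ x ∂m, x ∈ toMeasurable m E → x ∈ E :=
    hE.toMeasurable_ae_eq.mem_iff.mono fun x hx => hx.1
  rw [← measure_toMeasurable]
  exact hP.measure_eq_zero_of_sum_iterate_le hT hu hu0 (measurableSet_toMeasurable m E) hE_fin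
    (hmem.mono fun x hx hxE => hε.trans_le (hx hxE).1) (hmem.mono fun x hx hxE => (hx hxE).2)

end IsTransferOperator

end

theorem stmt19_general {X : Type*} [MeasurableSpace X] (m : Measure X)
    (T : X → X) (hT : Conservative T m)
    (That : (X → ℝ) → (X → ℝ))
    (hmap : ∀ u : X → ℝ, Integrable u m → Integrable (That u) m)
    (hdual : ∀ u : X → ℝ, Integrable u m →
      ∀ v : X → ℝ, Measurable v → (∃ K : ℝ, ∀ x, |v x| ≤ K) →
        ∫ x, That u x * v x ∂m = ∫ x, u x * v (T x) ∂m) :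
    ∀ f : X → ℝ, Integrable f m → (∀ x, 0 ≤ f x) →
      ∀ᵐ x ∂m, 0 < f x →
        Tendsto (fun N : ℕ => ∑ n ∈ Finset.range N, (That^[n] f) x) atTop atTop := by
  intro f hf hf0
  have hP : IsTransferOperator m T That := ⟨hmap, hdual⟩
  have hf0' : 0 ≤ᵐ[m] f := ae_of_all _ hf0
  have hiter_nonneg : ∀ᵐ x ∂m, ∀ n, 0 ≤ (That^[n] f) x :=
    ae_all_iff.2 fun n => (hP.iterate hT.measurable n).ae_nonneg hf hf0'
  have hbounded_null : ∀ᵐ x ∂m, ∀ k M : ℕ,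
      ¬(1 / ((k : ℝ) + 1) ≤ f x ∧ ∀ N, ∑ n ∈ Finset.range N, (That^[n] f) x ≤ M) := by
    simp only [ae_all_iff]
    exact fun k M => measure_eq_zero_iff_ae_notMem.1
      (hP.measure_setOf_le_and_sum_iterate_le_eq_zero hT hf hf0' (by positivity) M)
  filter_upwards [hiter_nonneg, hbounded_null] with x hx_nonneg hx_unbounded hfx
  obtain ⟨k, hk⟩ := exists_nat_one_div_lt hfx
  refine tendsto_atTop_atTop_of_monotone (monotone_nat_of_le_succ fun N => ?_) fun b => ?_
  · rw [Finset.sum_range_succ]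
    exact le_add_of_nonneg_right (hx_nonneg N)
  · obtain ⟨M, hM⟩ := exists_nat_ge b
    obtain ⟨N, hN⟩ := not_forall.1 (not_and.1 (hx_unbounded k M) hk.le)
    exact ⟨N, hM.trans (not_le.1 hN).le⟩

/-- If `T` is a conservative non-singular map of a σ-finite measure space and `T̂` is
its transfer operator (characterized by `∫ (T̂ u)·v dm = ∫ u·(v∘T) dm` for integrable
`u` and bounded measurable `v`), then for every nonnegative integrable `f`,
`∑_n T̂^n f(x) = ∞` for `m`-almost every `x` with `f(x) > 0`. -/
theorem stmt19 {X : Type*} [MeasurableSpace X] (m : Measure X) [SigmaFinite m]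
    (T : X → X) (hT : Conservative T m)
    (That : (X → ℝ) → (X → ℝ))
    (hmap : ∀ u : X → ℝ, Integrable u m → Integrable (That u) m)
    (hdual : ∀ u : X → ℝ, Integrable u m →
      ∀ v : X → ℝ, Measurable v → (∃ K : ℝ, ∀ x, |v x| ≤ K) →
        ∫ x, That u x * v x ∂m = ∫ x, u x * v (T x) ∂m) :
    ∀ f : X → ℝ, Integrable f m → (∀ x, 0 ≤ f x) →
      ∀ᵐ x ∂m, 0 < f x →
        Tendsto (fun N : ℕ => ∑ n ∈ Finset.range N, (That^[n] f) x) atTop atTop :=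
  stmt19_general m T hT That hmap hdual
end
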